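/- arXiv:2602.04610 — 9 statements merged into one kernel-verified Lean document; each statement's English description precedes it below -/
import Mathlib

section
/- Let M be a relational Fraïssé structure. Then M is locally replicable if and only if M has the galah property. -/
open FirstOrder FirstOrder.Language Set CategoryTheory

universe u v w x

section Defs

variable (L : FirstOrder.Language.{u, v}) (M : Type w) [L.Structure M]

/-- `X ⊆ M` contains a copy of `M`: there is a substructure of `M` with domain
contained in `X` that is isomorphic to `M`. -/
def ContainsCopy (X : Set M) : Prop :=
  ∃ S : L.Substructure M, (S : Set M) ⊆ X ∧ Nonempty (S ≃[L] M)

/-- The induced substructure on `C` is isomorphic to `M`. -/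
def IsCopy (C : Set M) : Prop :=
  ∃ S : L.Substructure M, (S : Set M) = C ∧ Nonempty (S ≃[L] M)

/-- The galah property: for every partition `(C, Cᶜ)` of the domain of `M`, either the
induced substructure on `C` is isomorphic to `M`, or `Cᶜ` contains a copy of `M`. -/
def GalahProperty : Prop := ∀ C : Set M, IsCopy L M C ∨ ContainsCopy L M Cᶜ

/-- Indivisibility: for every partition `(C, Cᶜ)` of the domain of `M`, one of the two
parts contains a copy of `M`. -/
def Indivisible : Prop := ∀ C : Set M, ContainsCopy L M C ∨ ContainsCopy L M Cᶜ

/-- `v` and `b` realize the same quantifier-free type over the parameter set `A`. -/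
def SameQfTypeOver (A : Set M) (v b : M) : Prop :=
  ∀ (n : ℕ) (φ : L.Formula (Fin (n + 1))), φ.IsQF →
    ∀ g : Fin n → M, (∀ i, g i ∈ A) →
      (φ.Realize (Fin.cons v g) ↔ φ.Realize (Fin.cons b g))

/-- Local replicability: every basic open set
`{v : M | qftp(v / A) = qftp(b / A)}`, for `A` a finite substructure of `M` and
`b ∈ M \\ A`, contains a copy of `M`. -/
def LocallyReplicable : Prop :=
  ∀ A : L.Substructure M, (A : Set M).Finite → ∀ b : M, b ∉ (A : Set M) →
    ContainsCopy L M {v : M | SameQfTypeOver L M (A : Set M) v b}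

/-- The infinite `k`-sunflower property: every structure on `k`-sets isomorphic to `M`
contains an induced substructure isomorphic to `M` whose domain is a sunflower. -/
def InfiniteKSunflowerProperty (k : ℕ) : Prop :=
  ∀ (α : Type x) (X : Set (Finset α)), (∀ v ∈ X, v.card = k) →
    ∀ [L.Structure ↥X], Nonempty (M ≃[L] ↥X) →
      ∃ (f : M ↪[L] ↥X) (c : Set α),
        ∀ a b : M, a ≠ b →
          ((f a : Finset α) : Set α) ∩ ((f b : Finset α) : Set α) = c

/-- The infinite sunflower property: the infinite `k`-sunflower property for all `k ≥ 1`. -/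
def InfiniteSunflowerProperty : Prop :=
  ∀ k : ℕ, 1 ≤ k → InfiniteKSunflowerProperty.{u, v, w, x} L M k

/-- A class of structures has strong amalgamation if any two embeddings from a common
structure can be amalgamated so that the images of the two structures intersect exactly
in the image of the common structure. -/
def HasStrongAmalgamation (K : Set (Bundled.{w} L.Structure)) : Prop :=
  ∀ A B₀ B₁ : Bundled.{w} L.Structure, A ∈ K → B₀ ∈ K → B₁ ∈ K →
    ∀ (f₀ : A ↪[L] B₀) (f₁ : A ↪[L] B₁),
      ∃ C : Bundled.{w} L.Structure, C ∈ K ∧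
        ∃ (g₀ : B₀ ↪[L] C) (g₁ : B₁ ↪[L] C),
          g₀.comp f₀ = g₁.comp f₁ ∧
          Set.range g₀ ∩ Set.range g₁ = Set.range (g₀.comp f₀)

end Defs

section Helpers
variable {L : FirstOrder.Language.{u, v}} {M : Type w} [L.Structure M]

lemma sqt_eq_iff {A : Set M} {v b : M} (h : SameQfTypeOver L M A v b) {a : M} (ha : a ∈ A) :
    (v = a ↔ b = a) := by
  have key := h 1 (Term.equal (Term.var 0) (Term.var 1))
    ((BoundedFormula.IsAtomic.equal _ _).isQF) (fun _ => a) (fun _ => ha)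
  simpa [Formula.realize_equal, Term.realize] using key

lemma sqt_not_mem {A : Set M} {v b : M} (h : SameQfTypeOver L M A v b) (hb : b ∉ A) :
    v ∉ A := fun hv => hb (((sqt_eq_iff h hv).1 rfl) ▸ hv)

open scoped Classical in
lemma sqt_relMap_iff {A : Set M} {v b : M} (h : SameQfTypeOver L M A v b)
    {n : ℕ} (r : L.Relations n) (y : Fin n → M) (hy : ∀ i, y i ∈ A ∨ y i = b) :
    (Structure.RelMap r y ↔ Structure.RelMap r (fun i => if y i ∈ A then y i else v)) := by
  by_cases hA : ∃ a₀, a₀ ∈ A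
  · obtain ⟨a₀, ha₀⟩ := hA
    have key := h n (Relations.formula r (fun i => Term.var (if y i ∈ A then Fin.succ i else 0)))
      ((BoundedFormula.IsAtomic.rel _ _).isQF) (fun i => if y i ∈ A then y i else a₀)
      (fun i => by split_ifs with hh; exacts [hh, ha₀])
    simp only [Formula.realize_rel] at key
    have e1 : ∀ w : M, (fun i => Term.realize (Fin.cons w (fun i => if y i ∈ A then y i else a₀))
        ((Term.var (if y i ∈ A then Fin.succ i else 0) : L.Term (Fin (n+1)))))
        = (fun i => if y i ∈ A then y i else w) := by
      intro w; funext i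
      by_cases hh : y i ∈ A <;> simp [hh, Term.realize]
    rw [e1 v, e1 b] at key
    have e2 : (fun i => if y i ∈ A then y i else b) = y := by
      funext i
      by_cases hh : y i ∈ A
      · simp [hh]
      · simp [hh, (hy i).resolve_left hh]
    rw [e2] at key
    exact key.symm
  · have hyb : ∀ i, y i = b := fun i => (hy i).resolve_left (fun hc => hA ⟨_, hc⟩)
    have key := h 0 (Relations.formula r (fun _ => Term.var 0))
      ((BoundedFormula.IsAtomic.rel _ _).isQF) (fun i => i.elim0) (fun i => i.elim0)
    simp only [Formula.realize_rel] at key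
    simp only [Term.realize] at key
    have h1 : y = fun _ => b := funext hyb
    have h2 : (fun i => if y i ∈ A then y i else v) = fun _ => v := by
      funext i; exact if_neg (fun hc => hA ⟨_, hc⟩)
    rw [h2, h1]
    simp only [Fin.cons_zero] at key
    exact key.symm

lemma isEmpty_bot_rel [L.IsRelational] : IsEmpty ((⊥ : L.Substructure M)) :=
  ⟨fun x => by
    have hx : (↑x : M) ∈ Substructure.closure L (∅ : Set M) := by
      rw [Substructure.closure_empty]; exact x.2
    exact absurd ((Substructure.mem_closure_iff_of_isRelational L _ _).1 hx)
      (Set.notMem_empty _)⟩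

end Helpers

/-- For a relational Fraïssé structure, local replicability is equivalent to the galah
property. -/
theorem statement3 (L : FirstOrder.Language.{u, v}) [L.IsRelational]
    (M : Type w) [L.Structure M] [Countable M]
    (hM : L.IsUltrahomogeneous M) :
    LocallyReplicable L M ↔ GalahProperty L M := by
  classical
  constructor
  · intro hLR C
    by_cases hD : ContainsCopy L M Cᶜ
    · exact Or.inr hD
    left
    have P : ∀ A : L.Substructure M, (A : Set M).Finite → ∀ b : M, b ∉ (A : Set M) →
        ∃ v ∈ C, SameQfTypeOver L M (A : Set M) v b := by
      intro A hA b hb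
      by_contra hcon
      push_neg at hcon
      obtain ⟨T, hT1, hT2⟩ := hLR A hA b hb
      exact hD ⟨T, fun x hx hxC => hcon x hxC (hT1 hx), hT2⟩
    set S : L.Substructure M := Substructure.closure L C with hSdef
    have hSC : (S : Set M) = C := Substructure.closure_eq_of_isRelational L C
    refine ⟨S, hSC, ?_⟩
    haveI h1 : IsEmpty ((⊥ : L.Substructure M)) := isEmpty_bot_rel
    haveI h2 : IsEmpty ((⊥ : L.Substructure ↥S)) := isEmpty_bot_rel
    let e0 : (⊥ : L.Substructure M) ≃[L] (⊥ : L.Substructure ↥S) :=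
      { toFun := isEmptyElim
        invFun := isEmptyElim
        left_inv := fun x => isEmptyElim x
        right_inv := fun x => isEmptyElim x
        map_fun' := fun {k} fn => isEmptyElim fn
        map_rel' := fun {k} r x => by
          match k, r, x with
          | 0, r, x =>
            show Structure.RelMap r
                (fun i : Fin 0 => (((isEmptyElim (x i) : (⊥ : L.Substructure ↥S)) : ↥S) : M))
              ↔ Structure.RelMap r (fun i : Fin 0 => ((x i : M)))
            exact iff_of_eq (congrArg _ (funext fun i => i.elim0))
          | k+1, r, x => exact isEmptyElim (x 0) }
    have ext1 : L.IsExtensionPair (↥S) M := by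
      rw [isExtensionPair_iff_exists_embedding_closure_singleton_sup]
      intro B hB f m
      set T : L.Substructure ↥S := Substructure.closure L ({m} : Set ↥S) ⊔ B with hT
      haveI : Nonempty (↥T ↪[L] M) := ⟨S.subtype.comp T.subtype⟩
      obtain ⟨g, hg⟩ := hM.extend_embedding ((B.fg_iff_structure_fg).1 hB) f
        (Substructure.inclusion (le_sup_right : B ≤ T))
      exact ⟨g, hg⟩
    have ext2 : L.IsExtensionPair M (↥S) := by
      rw [isExtensionPair_iff_exists_embedding_closure_singleton_sup]
      intro A hA f m
      by_cases hm : m ∈ A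
      · have hle : Substructure.closure L {m} ⊔ A = A :=
          sup_eq_right.2 ((Substructure.closure_le).2 (Set.singleton_subset_iff.2 hm))
        refine ⟨f.comp (Substructure.inclusion hle.le), ?_⟩
        ext a
        simp only [Embedding.comp_apply]
        exact congrArg (fun z : ↥S => (z : M)) (congrArg f (Subtype.ext rfl))
      · obtain ⟨σ, hσ⟩ := hM A hA (S.subtype.comp f)
        have hσ' : ∀ a : A, ((f a : ↥S) : M) = σ a := fun a =>
          DFunLike.congr_fun hσ a
        set A' : Set M := (⇑σ) '' (A : Set M) with hA'def
        have hA'C : A' ⊆ C := by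
          rintro _ ⟨a, ha, rfl⟩
          rw [← hσ' ⟨a, ha⟩, ← hSC]
          exact (f ⟨a, ha⟩).2
        have hAfin : (A : Set M).Finite := by
          haveI := hA.finite
          exact Set.toFinite _
        have hA'fin : A'.Finite := hAfin.image _
        have hbA' : σ m ∉ A' := by
          rintro ⟨a, ha, hh⟩
          exact hm (σ.injective hh ▸ ha)
        have hP := P (Substructure.closure L A')
          (by rw [Substructure.closure_eq_of_isRelational]; exact hA'fin)
          (σ m) (by rw [Substructure.closure_eq_of_isRelational]; exact hbA')
        rw [Substructure.closure_eq_of_isRelational] at hP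
        obtain ⟨v, hvC, hv⟩ := hP
        have hmemT : ∀ x : M,
            x ∈ (Substructure.closure L {m} ⊔ A : L.Substructure M) ↔ x = m ∨ x ∈ A := by
          intro x
          have hT : (Substructure.closure L {m} ⊔ A : L.Substructure M)
              = Substructure.closure L ({m} ∪ (A : Set M)) := by
            rw [Substructure.closure_union, Substructure.closure_eq]
          rw [hT, Substructure.mem_closure_iff_of_isRelational]
          simp
        have hvS : v ∈ S := by
          rw [← SetLike.mem_coe, hSC]; exact hvC
        have hvA' : v ∉ A' := sqt_not_mem hv hbA'
        set F : (Substructure.closure L {m} ⊔ A : L.Substructure M) → ↥S := fun x =>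
          if h : (x : M) ∈ A then f ⟨x, h⟩ else ⟨v, hvS⟩ with hFdef
        have hFcoe : ∀ x, ((F x : ↥S) : M) = if (x : M) ∈ A then σ x else v := by
          intro x
          by_cases h : (x : M) ∈ A
          · rw [hFdef]; dsimp only; rw [dif_pos h, if_pos h]; exact hσ' ⟨x, h⟩
          · rw [hFdef]; dsimp only; rw [dif_neg h, if_neg h]
        have hinj : Function.Injective F := by
          intro x₁ x₂ hx
          have hx' : ((F x₁ : ↥S) : M) = ((F x₂ : ↥S) : M) := congrArg _ hx
          rw [hFcoe, hFcoe] at hx'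
          by_cases h1 : (x₁ : M) ∈ A <;> by_cases h2 : (x₂ : M) ∈ A
          · rw [if_pos h1, if_pos h2] at hx'
            exact Subtype.ext (σ.injective hx')
          · rw [if_pos h1, if_neg h2] at hx'
            exact absurd (hx' ▸ Set.mem_image_of_mem _ h1) hvA'
          · rw [if_neg h1, if_pos h2] at hx'
            exact absurd (hx'.symm ▸ Set.mem_image_of_mem _ h2) hvA'
          · have e1 : (x₁ : M) = m := ((hmemT _).1 x₁.2).resolve_right h1
            have e2 : (x₂ : M) = m := ((hmemT _).1 x₂.2).resolve_right h2
            exact Subtype.ext (e1.trans e2.symm)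
        refine ⟨⟨⟨F, hinj⟩, fun {k} fn => isEmptyElim fn, fun {k} r x => ?_⟩, ?_⟩
        · show Structure.RelMap r (fun i => ((F (x i) : ↥S) : M))
            ↔ Structure.RelMap r (fun i => ((x i : M)))
          have hy : ∀ i, σ (x i : M) ∈ A' ∨ σ (x i : M) = σ m := fun i => by
            rcases (hmemT _).1 (x i).2 with h | h
            · exact Or.inr (by rw [h])
            · exact Or.inl (Set.mem_image_of_mem _ h)
          have main := sqt_relMap_iff hv r (fun i => σ (x i : M)) hy
          have step1 := StrongHomClass.map_rel σ r (fun i => ((x i : M)))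
          simp only [Function.comp_def] at step1
          have e3 : (fun i => ((F (x i) : ↥S) : M))
              = fun i => if σ (x i : M) ∈ A' then σ (x i : M) else v := by
            funext i
            rw [hFcoe]
            by_cases h : (x i : M) ∈ A
            · rw [if_pos h, if_pos (Set.mem_image_of_mem _ h)]
            · have hxm : (x i : M) = m := ((hmemT _).1 (x i).2).resolve_right h
              rw [if_neg h, hxm, if_neg hbA']
          rw [e3]
          exact (main.symm.trans step1)
        · ext a
          simp only [Embedding.comp_apply]
          refine congrArg (fun z : ↥S => (z : M)) ?_
          show f a = F (Substructure.inclusion le_sup_right a)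
          rw [hFdef]; dsimp only
          rw [dif_pos (show ((Substructure.inclusion le_sup_right a : _) : M) ∈ A from a.2)]
          exact congrArg f (Subtype.ext rfl)
    obtain ⟨e, -⟩ := equiv_between_cg (Structure.cg_of_countable) (Structure.cg_of_countable)
      ⟨⟨⊥, ⊥, e0⟩, Substructure.fg_bot⟩ ext2 ext1
    exact ⟨e.symm⟩
  · intro hG A hAfin b hb
    rcases hG {v : M | SameQfTypeOver L M (A : Set M) v b}ᶜ with h | h
    · exfalso
      obtain ⟨S, hS, ⟨j⟩⟩ := h
      have hAS : A ≤ S := by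
        intro a ha
        rw [← SetLike.mem_coe, hS]
        simp only [Set.mem_compl_iff, Set.mem_setOf_eq]
        intro hU
        have hba : b = a := (sqt_eq_iff hU ha).1 rfl
        exact (hba ▸ hb) ha
      have hAfg : A.FG := Substructure.fg_iff_finite.2 hAfin.to_subtype
      obtain ⟨σ, hσ⟩ := hM A hAfg (j.toEmbedding.comp (Substructure.inclusion hAS))
      let h0 : M ↪[L] M :=
        Embedding.comp S.subtype (Embedding.comp j.symm.toEmbedding σ.toEmbedding)
      have hfix : ∀ a, a ∈ A → h0 a = a := by
        intro a ha
        have hh := DFunLike.congr_fun hσ ⟨a, ha⟩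
        show ((j.symm (σ a) : ↥S) : M) = a
        rw [show σ a = j (Substructure.inclusion hAS ⟨a, ha⟩) from hh.symm]
        rw [j.symm_apply_apply]
        rfl
      have hvS : (h0 b) ∈ (S : Set M) := (j.symm (σ b)).2
      have hvU : SameQfTypeOver L M (A : Set M) (h0 b) b := by
        intro n φ hφ g hg
        have key := hφ.realize_embedding h0 (v := Fin.cons b g) (xs := default)
        have e1 : (⇑h0) ∘ Fin.cons b g = Fin.cons (h0 b) g := by
          funext i
          refine Fin.cases rfl (fun j' => ?_) i
          show h0 (g j') = g j'
          exact hfix _ (hg j')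
        have e2 : (⇑h0) ∘ (default : Fin 0 → M) = default := Subsingleton.elim _ _
        rw [e1, e2] at key
        exact key
      rw [hS] at hvS
      exact hvS hvU
    · rwa [compl_compl] at h
end

section
/- (1) For every partition of ℚ into two sets C and D, either C with the order inherited from ℚ is order-isomorphic to ℚ, or there is a subset of D that with the inherited order is order-isomorphic to ℚ. (2) This is not true with both alternatives strengthened to isomorphism: there exists a partition (C, D) of ℚ such that neither C nor D with the inherited order is order-isomorphic to ℚ. -/
/-!
If `C` meets every nonempty open interval of `ℚ`, then `C` is itself a countable dense linear
order without endpoints, hence isomorphic to `ℚ` by Cantor's theorem. Otherwise some interval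
`(a, b)` misses `C`, so it lies in the complement, and it is such an order as well.

For the failure of the pigeonhole property take `C = (a, c) ∪ {b}` with `a < c < b`: `C` has a
greatest element, while in `Cᶜ` the point `c` covers `a`.
-/

open Set

section Isomorphism

variable {α β : Type*} [Preorder α] [Preorder β]

theorem OrderIso.isEmpty_of_isMax [NoMaxOrder α] {b : β} (hb : IsMax b) : IsEmpty (α ≃o β) :=
  ⟨fun e => not_isMax (e.symm b) (e.symm.isMax_apply.2 hb)⟩

theorem OrderIso.isEmpty_of_covBy [DenselyOrdered α] {a b : β} (hab : a ⋖ b) :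
    IsEmpty (α ≃o β) :=
  ⟨fun e => have := (denselyOrdered_iff_of_orderIsoClass e).1 ‹_›; not_covBy hab⟩

end Isomorphism

section MeetsIntervals

variable {α : Type*} [LinearOrder α] {C : Set α}

theorem denselyOrdered_of_forall_inter_Ioo_nonempty
    (hC : ∀ a b, a < b → (C ∩ Ioo a b).Nonempty) : DenselyOrdered C :=
  ⟨fun x y hxy => by
    obtain ⟨c, hc, hxc, hcy⟩ := hC x y hxy
    exact ⟨⟨c, hc⟩, hxc, hcy⟩⟩

theorem noMaxOrder_of_forall_inter_Ioo_nonempty [NoMaxOrder α]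
    (hC : ∀ a b, a < b → (C ∩ Ioo a b).Nonempty) : NoMaxOrder C :=
  ⟨fun x => by
    obtain ⟨y, hxy⟩ := exists_gt (x : α)
    obtain ⟨c, hc, hxc, -⟩ := hC x y hxy
    exact ⟨⟨c, hc⟩, hxc⟩⟩

theorem noMinOrder_of_forall_inter_Ioo_nonempty [NoMinOrder α]
    (hC : ∀ a b, a < b → (C ∩ Ioo a b).Nonempty) : NoMinOrder C :=
  ⟨fun x => by
    obtain ⟨y, hyx⟩ := exists_lt (x : α)
    obtain ⟨c, hc, -, hcx⟩ := hC y x hyx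
    exact ⟨⟨c, hc⟩, hcx⟩⟩

theorem nonempty_of_forall_inter_Ioo_nonempty [Nonempty α] [NoMaxOrder α]
    (hC : ∀ a b, a < b → (C ∩ Ioo a b).Nonempty) : C.Nonempty :=
  let a := Classical.arbitrary α
  have ⟨_, hab⟩ := exists_gt a
  (hC a _ hab).mono inter_subset_left

end MeetsIntervals

section CountableDense

variable {α : Type*} [LinearOrder α] [Countable α] [DenselyOrdered α] [NoMinOrder α]
  [NoMaxOrder α] [Nonempty α]

theorem nonempty_orderIso_of_forall_inter_Ioo_nonempty {C : Set α}
    (hC : ∀ a b, a < b → (C ∩ Ioo a b).Nonempty) : Nonempty (α ≃o C) :=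
  have := denselyOrdered_of_forall_inter_Ioo_nonempty hC
  have := noMinOrder_of_forall_inter_Ioo_nonempty hC
  have := noMaxOrder_of_forall_inter_Ioo_nonempty hC
  have := (nonempty_of_forall_inter_Ioo_nonempty hC).to_subtype
  Order.iso_of_countable_dense α C

theorem nonempty_orderIso_Ioo {a b : α} (hab : a < b) : Nonempty (α ≃o Ioo a b) :=
  have := nonempty_Ioo_subtype hab
  Order.iso_of_countable_dense α _

theorem nonempty_orderIso_or_exists_orderIso_subset_compl (C : Set α) :
    Nonempty (α ≃o C) ∨ ∃ S : Set α, S ⊆ Cᶜ ∧ Nonempty (α ≃o S) := by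
  by_cases hC : ∀ a b, a < b → (C ∩ Ioo a b).Nonempty
  · exact Or.inl (nonempty_orderIso_of_forall_inter_Ioo_nonempty hC)
  · push Not at hC
    obtain ⟨a, b, hab, hCab⟩ := hC
    refine Or.inr ⟨Ioo a b, ?_, nonempty_orderIso_Ioo hab⟩
    exact (disjoint_iff_inter_eq_empty.2 hCab).subset_compl_left

end CountableDense

theorem exists_not_orderIso_and_not_orderIso_compl {α : Type*} [LinearOrder α]
    [DenselyOrdered α] [NoMaxOrder α] [Nonempty α] :
    ∃ C : Set α, ¬ Nonempty (α ≃o C) ∧ ¬ Nonempty (α ≃o ↥(Cᶜ)) := by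
  let a := Classical.arbitrary α
  obtain ⟨b, hab⟩ := exists_gt a
  obtain ⟨c, hac, hcb⟩ := exists_between hab
  let C := Ioo a c ∪ {b}
  have hbC : b ∈ C := Or.inr rfl
  have haC : a ∉ C := by simp [C, hab.ne]
  have hcC : c ∉ C := by simp [C, hcb.ne]
  have hbMax : IsMax (⟨b, hbC⟩ : C) := by
    rintro ⟨x, hx | rfl⟩ -
    exacts [Subtype.mk_le_mk.2 (hx.2.trans hcb).le, le_rfl]
  have hacCovBy : (⟨a, haC⟩ : ↥(Cᶜ)) ⋖ ⟨c, hcC⟩ :=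
    ⟨hac, fun x hax hxc => x.2 (Or.inl ⟨hax, hxc⟩)⟩
  exact ⟨C, not_nonempty_iff.2 (OrderIso.isEmpty_of_isMax hbMax),
    not_nonempty_iff.2 (OrderIso.isEmpty_of_covBy hacCovBy)⟩

/-- (1) `(ℚ, <)` has the galah property: for every partition `(C, Cᶜ)` of `ℚ`, either `C`
with the inherited order is order-isomorphic to `ℚ`, or some subset of `Cᶜ` with the
inherited order is order-isomorphic to `ℚ`.  (2) `(ℚ, <)` does not have the pigeonhole
property: there is a partition `(C, Cᶜ)` such that neither part, with the inherited
order, is order-isomorphic to `ℚ`. -/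
theorem statement4 :
    (∀ C : Set ℚ, Nonempty (ℚ ≃o C) ∨ ∃ S : Set ℚ, S ⊆ Cᶜ ∧ Nonempty (ℚ ≃o S)) ∧
    (∃ C : Set ℚ, ¬ Nonempty (ℚ ≃o C) ∧ ¬ Nonempty (ℚ ≃o ↥(Cᶜ))) :=
  ⟨nonempty_orderIso_or_exists_orderIso_subset_compl, exists_not_orderIso_and_not_orderIso_compl⟩
end

section
/- Let k ≥ 1, let X be a set of k-element subsets of ℕ, and let ≺ be a linear order on X such that (X, ≺) is order-isomorphic to (ℚ, <). Then there exists S ⊆ X such that (S, ≺) is order-isomorphic to (ℚ, <) and S is a sunflower: there is a set c with u ∩ v = c for all distinct u, v ∈ S. -/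
/-- Avoidance lemma: if every `Aₙ = {q : n ∈ f q}` is "nowhere dense" inside `(a,b)`,
then in every subinterval we can find a point whose `f`-value avoids a given finset. -/
lemma sun_avoid (f : ℚ → Finset ℕ) (a b : ℚ)
    (H : ∀ (n : ℕ) (u v : ℚ), a ≤ u → v ≤ b → u < v →
      ∃ u' v', u ≤ u' ∧ v' ≤ v ∧ u' < v' ∧ ∀ p, u' < p → p < v' → n ∉ f p) :
    ∀ (U : Finset ℕ) (u v : ℚ), a ≤ u → v ≤ b → u < v →
      ∃ p, u < p ∧ p < v ∧ ∀ n ∈ U, n ∉ f p := by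
  intro U
  induction U using Finset.induction_on with
  | empty =>
    intro u v _ _ huv
    obtain ⟨p, h1, h2⟩ := exists_between huv
    exact ⟨p, h1, h2, by simp⟩
  | insert n U hn ih =>
    intro u v hau hvb huv
    obtain ⟨u', v', h1, h2, h3, h4⟩ := H n u v hau hvb huv
    obtain ⟨p, hp1, hp2, hp3⟩ := ih u' v' (hau.trans h1) (h2.trans hvb) h3
    refine ⟨p, lt_of_le_of_lt h1 hp1, lt_of_lt_of_le hp2 h2, ?_⟩
    intro m hm
    rcases Finset.mem_insert.mp hm with rfl | hm
    · exact h4 p hp1 hp2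
    · exact hp3 m hm

/-- Invariant for the list of points constructed so far. -/
def sun_good (E : ℕ ≃ ℚ) (f : ℚ → Finset ℕ) (a b : ℚ) (l : List ℚ) : Prop :=
  (∀ i, i < l.length → a < l.getD i 0 ∧ l.getD i 0 < b) ∧
  (∀ i j, i < l.length → j < l.length → E i < E j → l.getD i 0 < l.getD j 0) ∧
  (∀ i j, i < l.length → j < l.length → i ≠ j → ∀ n ∈ f (l.getD i 0), n ∉ f (l.getD j 0))

lemma sun_good_ext (E : ℕ ≃ ℚ) (f : ℚ → Finset ℕ) (a b : ℚ) (hab : a < b)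
    (H : ∀ (n : ℕ) (u v : ℚ), a ≤ u → v ≤ b → u < v →
      ∃ u' v', u ≤ u' ∧ v' ≤ v ∧ u' < v' ∧ ∀ p, u' < p → p < v' → n ∉ f p)
    (l : List ℚ) (hl : sun_good E f a b l) :
    ∃ p, sun_good E f a b (l ++ [p]) := by
  classical
  obtain ⟨hbd, hord, hdis⟩ := hl
  set m := l.length with hm
  set Ls : Finset ℚ :=
    insert a (((Finset.range m).filter (fun i => E i < E m)).image (fun i => l.getD i 0)) with hLs
  set Rs : Finset ℚ :=
    insert b (((Finset.range m).filter (fun j => E m < E j)).image (fun j => l.getD j 0)) with hRs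
  have hLne : Ls.Nonempty := ⟨a, by simp [hLs]⟩
  have hRne : Rs.Nonempty := ⟨b, by simp [hRs]⟩
  set u := Ls.max' hLne with hu
  set v := Rs.min' hRne with hv
  have hau : a ≤ u := Finset.le_max' _ a (by simp [hLs])
  have hvb : v ≤ b := Finset.min'_le _ b (by simp [hRs])
  have hLle : ∀ i, i < m → E i < E m → l.getD i 0 ≤ u := by
    intro i hi hEi
    exact Finset.le_max' _ _ (by simp only [hLs, Finset.mem_insert, Finset.mem_image,
      Finset.mem_filter, Finset.mem_range]; exact Or.inr ⟨i, ⟨hi, hEi⟩, rfl⟩)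
  have hRle : ∀ j, j < m → E m < E j → v ≤ l.getD j 0 := by
    intro j hj hEj
    exact Finset.min'_le _ _ (by simp only [hRs, Finset.mem_insert, Finset.mem_image,
      Finset.mem_filter, Finset.mem_range]; exact Or.inr ⟨j, ⟨hj, hEj⟩, rfl⟩)
  have huv : u < v := by
    have hmemu := Finset.max'_mem Ls hLne
    have hmemv := Finset.min'_mem Rs hRne
    rw [← hu] at hmemu
    rw [← hv] at hmemv
    simp only [hLs, Finset.mem_insert, Finset.mem_image, Finset.mem_filter,
      Finset.mem_range] at hmemu
    simp only [hRs, Finset.mem_insert, Finset.mem_image, Finset.mem_filter,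
      Finset.mem_range] at hmemv
    rcases hmemu with hua | ⟨i, ⟨hi, hEi⟩, hiu⟩
    · rcases hmemv with hvb' | ⟨j, ⟨hj, hEj⟩, hjv⟩
      · rw [hua, hvb']; exact hab
      · rw [hua, ← hjv]; exact (hbd j hj).1
    · rcases hmemv with hvb' | ⟨j, ⟨hj, hEj⟩, hjv⟩
      · rw [hvb', ← hiu]; exact (hbd i hi).2
      · rw [← hiu, ← hjv]
        exact hord i j hi hj (hEi.trans hEj)
  obtain ⟨p, hup, hpv, hpU⟩ := sun_avoid f a b H (l.toFinset.biUnion f) u v hau hvb huv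
  have hpavoid : ∀ i, i < m → ∀ n ∈ f (l.getD i 0), n ∉ f p := by
    intro i hi n hn
    refine hpU n (Finset.mem_biUnion.mpr ⟨l.getD i 0, ?_, hn⟩)
    rw [List.mem_toFinset, List.getD_eq_getElem l 0 hi]
    exact List.getElem_mem _
  have hgetlt : ∀ i, i < m → (l ++ [p]).getD i 0 = l.getD i 0 := fun i hi =>
    List.getD_append l [p] 0 i hi
  have hgetm : (l ++ [p]).getD m 0 = p := by
    rw [List.getD_append_right l [p] 0 m (le_of_eq hm.symm)]
    simp [hm]
  have hlen : (l ++ [p]).length = m + 1 := by simp [hm]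
  refine ⟨p, ?_, ?_, ?_⟩
  · intro i hi
    rw [hlen] at hi
    rcases Nat.lt_succ_iff_lt_or_eq.mp hi with hi | rfl
    · rw [hgetlt i hi]; exact hbd i hi
    · rw [hgetm]; exact ⟨lt_of_le_of_lt hau hup, lt_of_lt_of_le hpv hvb⟩
  · intro i j hi hj hEij
    rw [hlen] at hi hj
    rcases Nat.lt_succ_iff_lt_or_eq.mp hi with hi | rfl <;>
      rcases Nat.lt_succ_iff_lt_or_eq.mp hj with hj | rfl
    · rw [hgetlt i hi, hgetlt j hj]; exact hord i j hi hj hEij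
    · rw [hgetlt i hi, hgetm]
      exact lt_of_le_of_lt (hLle i hi hEij) hup
    · rw [hgetm, hgetlt j hj]
      exact lt_of_lt_of_le hpv (hRle j hj hEij)
    · exact absurd hEij (lt_irrefl _)
  · intro i j hi hj hij n hn
    rw [hlen] at hi hj
    rcases Nat.lt_succ_iff_lt_or_eq.mp hi with hi | rfl <;>
      rcases Nat.lt_succ_iff_lt_or_eq.mp hj with hj | rfl
    · rw [hgetlt i hi] at hn; rw [hgetlt j hj]
      exact hdis i j hi hj hij n hn
    · rw [hgetlt i hi] at hn; rw [hgetm]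
      exact hpavoid i hi n hn
    · rw [hgetm] at hn; rw [hgetlt j hj]
      intro hcon
      exact hpavoid j hj n hcon hn
    · exact absurd rfl hij

open Classical in
noncomputable def chainStep {α : Type*} (P : List α → Prop)
    (ext : ∀ l, P l → ∃ p, P (l ++ [p])) : List α → List α :=
  fun l => if h : P l then l ++ [(ext l h).choose] else l

lemma chainStep_eq {α : Type*} (P : List α → Prop)
    (ext : ∀ l, P l → ∃ p, P (l ++ [p])) (l : List α) (h : P l) :
    chainStep P ext l = l ++ [(ext l h).choose] := by
  unfold chainStep
  exact dif_pos h

lemma chain_good {α : Type*} (P : List α → Prop) (h0 : P [])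
    (ext : ∀ l, P l → ∃ p, P (l ++ [p])) :
    ∀ n, ((chainStep P ext)^[n] []).length = n ∧ P ((chainStep P ext)^[n] []) := by
  intro n
  induction n with
  | zero => exact ⟨rfl, h0⟩
  | succ n ih =>
    rw [Function.iterate_succ_apply', chainStep_eq P ext _ ih.2]
    exact ⟨by simp [ih.1], (ext _ ih.2).choose_spec⟩

lemma chain_exists {α : Type*} (P : List α → Prop) (h0 : P [])
    (ext : ∀ l, P l → ∃ p, P (l ++ [p])) :
    ∃ G : ℕ → List α, (∀ n, (G n).length = n ∧ P (G n)) ∧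
      (∀ n, ∃ p, G (n + 1) = G n ++ [p]) := by
  refine ⟨fun n => (chainStep P ext)^[n] [], chain_good P h0 ext,
    fun n => ⟨(ext _ (chain_good P h0 ext n).2).choose, ?_⟩⟩
  show (chainStep P ext)^[n + 1] [] = (chainStep P ext)^[n] [] ++ _
  rw [Function.iterate_succ_apply', chainStep_eq P ext _ (chain_good P h0 ext n).2]

/-- In the "everywhere avoidable" case, we can find a copy of `ℚ` inside `(a,b)` on which
the `f`-values are pairwise disjoint. -/
lemma sun_noCase (f : ℚ → Finset ℕ) (a b : ℚ) (hab : a < b)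
    (H : ∀ (n : ℕ) (u v : ℚ), a ≤ u → v ≤ b → u < v →
      ∃ u' v', u ≤ u' ∧ v' ≤ v ∧ u' < v' ∧ ∀ p, u' < p → p < v' → n ∉ f p) :
    ∃ e : ℚ ↪o ℚ, (∀ q, a < e q ∧ e q < b) ∧
      ∀ q q' : ℚ, q ≠ q' → f (e q) ∩ f (e q') = ∅ := by
  classical
  obtain ⟨E⟩ : Nonempty (ℕ ≃ ℚ) := ⟨(Denumerable.eqv ℚ).symm⟩
  have ext : ∀ l, sun_good E f a b l → ∃ p, sun_good E f a b (l ++ [p]) :=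
    sun_good_ext E f a b hab H
  obtain ⟨G, hGgl, hGsucc⟩ : ∃ G : ℕ → List ℚ,
      (∀ n, (G n).length = n ∧ sun_good E f a b (G n)) ∧
      (∀ n, ∃ p, G (n + 1) = G n ++ [p]) :=
    chain_exists (sun_good E f a b) ⟨by simp, by simp, by simp⟩ ext
  set F : ℕ → ℚ := fun n => (G (n + 1)).getD n 0 with hF
  have hcoh : ∀ n i, i < n → (G n).getD i 0 = F i := by
    intro n
    induction n with
    | zero => intro i hi; omega
    | succ n ih =>
      intro i hi
      rcases Nat.lt_succ_iff_lt_or_eq.mp hi with hi | rfl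
      · obtain ⟨p, hp⟩ := hGsucc n
        rw [hp, List.getD_append _ _ _ _ (by rw [(hGgl n).1]; exact hi)]
        exact ih i hi
      · rfl
  have hbd : ∀ i, a < F i ∧ F i < b := by
    intro i
    have := (hGgl (i + 1)).2.1 i (by rw [(hGgl (i + 1)).1]; omega)
    exact this
  have hmono : ∀ i j, E i < E j → F i < F j := by
    intro i j hij
    have hn : i < max i j + 1 := by omega
    have hn' : j < max i j + 1 := by omega
    have := (hGgl (max i j + 1)).2.2.1 i j
      (by rw [(hGgl _).1]; omega) (by rw [(hGgl _).1]; omega) hij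
    rwa [hcoh _ i hn, hcoh _ j hn'] at this
  have hdis : ∀ i j, i ≠ j → ∀ n ∈ f (F i), n ∉ f (F j) := by
    intro i j hij n hn
    have := (hGgl (max i j + 1)).2.2.2 i j
      (by rw [(hGgl _).1]; omega) (by rw [(hGgl _).1]; omega) hij n
    rw [hcoh _ i (by omega), hcoh _ j (by omega)] at this
    exact this hn
  refine ⟨OrderEmbedding.ofStrictMono (fun q => F (E.symm q)) ?_, ?_, ?_⟩
  · intro q q' hqq'
    refine hmono _ _ ?_
    rwa [Equiv.apply_symm_apply, Equiv.apply_symm_apply]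
  · intro q
    exact hbd _
  · intro q q' hne
    apply Finset.eq_empty_iff_forall_notMem.mpr
    intro n hn
    rw [Finset.mem_inter] at hn
    have hι : E.symm q ≠ E.symm q' := fun hc => hne (by
      have := congrArg E hc; rwa [Equiv.apply_symm_apply, Equiv.apply_symm_apply] at this)
    exact hdis _ _ hι n hn.1 hn.2

/-- Key lemma: any injective family of `k`-sets indexed by `ℚ` contains, inside any
interval `(a,b)`, a copy of `ℚ` on which it is a sunflower. -/
lemma sun_key : ∀ (k : ℕ) (f : ℚ → Finset ℕ), Function.Injective f →
    (∀ q, (f q).card = k) → ∀ a b : ℚ, a < b →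
    ∃ e : ℚ ↪o ℚ, (∀ q, a < e q ∧ e q < b) ∧
      ∃ c : Finset ℕ, ∀ q q' : ℚ, q ≠ q' → f (e q) ∩ f (e q') = c := by
  intro k
  induction k with
  | zero =>
    intro f hinj hcard a b _
    exfalso
    have h0 : f 0 = f 1 := by
      rw [Finset.card_eq_zero.mp (hcard 0), Finset.card_eq_zero.mp (hcard 1)]
    exact absurd (hinj h0) (by norm_num)
  | succ k ih =>
    intro f hinj hcard a b hab
    by_cases hyes : ∃ (n : ℕ) (a' b' : ℚ), a ≤ a' ∧ b' ≤ b ∧ a' < b' ∧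
        ∀ u v : ℚ, a' ≤ u → v ≤ b' → u < v → ∃ p, u < p ∧ p < v ∧ n ∈ f p
    · obtain ⟨n, a', b', haa', hb'b, ha'b', hdense⟩ := hyes
      -- the set of points of (a',b') whose value contains n is a countable DLO w/o endpoints
      set S := {q : ℚ // a' < q ∧ q < b' ∧ n ∈ f q} with hS
      haveI : Nonempty S := by
        obtain ⟨p, h1, h2, h3⟩ := hdense a' b' le_rfl le_rfl ha'b'
        exact ⟨⟨p, h1, h2, h3⟩⟩
      haveI : DenselyOrdered S := by
        constructor
        intro x y hxy
        obtain ⟨p, h1, h2, h3⟩ := hdense x.1 y.1 x.2.1.le y.2.2.1.le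
          (Subtype.coe_lt_coe.mpr hxy)
        exact ⟨⟨p, x.2.1.trans h1, h2.trans y.2.2.1, h3⟩, h1, h2⟩
      haveI : NoMinOrder S := by
        constructor
        intro x
        obtain ⟨p, h1, h2, h3⟩ := hdense a' x.1 le_rfl x.2.2.1.le x.2.1
        exact ⟨⟨p, h1, h2.trans x.2.2.1, h3⟩, h2⟩
      haveI : NoMaxOrder S := by
        constructor
        intro x
        obtain ⟨p, h1, h2, h3⟩ := hdense x.1 b' x.2.1.le le_rfl x.2.2.1
        exact ⟨⟨p, x.2.1.trans h1, h2, h3⟩, h1⟩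
      obtain ⟨φ⟩ : Nonempty (ℚ ≃o S) := Order.iso_of_countable_dense ℚ S
      set f' : ℚ → Finset ℕ := fun q => (f (φ q).1).erase n with hf'
      have hmem : ∀ q : ℚ, n ∈ f (φ q).1 := fun q => (φ q).2.2.2
      have hins : ∀ q : ℚ, insert n (f' q) = f (φ q).1 := fun q =>
        Finset.insert_erase (hmem q)
      have hinj' : Function.Injective f' := by
        intro q q' hqq'
        have : f (φ q).1 = f (φ q').1 := by rw [← hins, ← hins, hqq']
        have := hinj this
        exact φ.injective (Subtype.val_injective this)
      have hcard' : ∀ q, (f' q).card = k := by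
        intro q
        rw [hf']
        simp only
        rw [Finset.card_erase_of_mem (hmem q), hcard]
        rfl
      obtain ⟨e', _, c', hc'⟩ := ih f' hinj' hcard' 0 1 one_pos
      refine ⟨(e'.trans φ.toOrderEmbedding).trans (OrderEmbedding.subtype _),
        ?_, insert n c', ?_⟩
      · intro q
        have h1 := (φ (e' q)).2.1
        have h2 := (φ (e' q)).2.2.1
        exact ⟨lt_of_le_of_lt haa' h1, lt_of_lt_of_le h2 hb'b⟩
      · intro q q' hne
        have hee : e' q ≠ e' q' := fun hc => hne (e'.injective hc)
        have hkey := hc' q q' hne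
        have hq : ∀ r : ℚ, ((e'.trans φ.toOrderEmbedding).trans (OrderEmbedding.subtype _)) r
            = (φ (e' r)).1 := fun r => rfl
        rw [hq q, hq q', ← hins (e' q), ← hins (e' q')]
        ext x
        simp only [Finset.mem_inter, Finset.mem_insert]
        constructor
        · rintro ⟨h1 | h1, h2 | h2⟩
          · exact Or.inl h1
          · exact Or.inl h1
          · exact Or.inl h2
          · exact Or.inr (hkey ▸ Finset.mem_inter.mpr ⟨h1, h2⟩)
        · rintro (rfl | hx)
          · exact ⟨Or.inl rfl, Or.inl rfl⟩
          · have h1 := hkey ▸ hx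
            rw [Finset.mem_inter] at h1
            exact ⟨Or.inr h1.1, Or.inr h1.2⟩
    · push_neg at hyes
      obtain ⟨e, hbd, hdis⟩ := sun_noCase f a b hab hyes
      exact ⟨e, hbd, ∅, hdis⟩

/-- `(ℚ, <)` has the infinite `k`-sunflower property for every `k ≥ 1`: if `X` is a set
of `k`-element subsets of `ℕ` and `≺` is a linear order on `X` order-isomorphic to
`(ℚ, <)`, then there is `S ⊆ X` (here: the range of an order-embedding of `ℚ`) which is
order-isomorphic to `(ℚ, <)` and is a sunflower. -/
theorem statement5 (k : ℕ) (hk : 1 ≤ k) (X : Set (Finset ℕ))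
    (hX : ∀ v ∈ X, v.card = k) (lt : ↥X → ↥X → Prop)
    (h : Nonempty (((· < ·) : ℚ → ℚ → Prop) ≃r lt)) :
    ∃ (f : ((· < ·) : ℚ → ℚ → Prop) ↪r lt) (c : Set ℕ),
      ∀ q q' : ℚ, q ≠ q' →
        ((f q : Finset ℕ) : Set ℕ) ∩ ((f q' : Finset ℕ) : Set ℕ) = c := by
  obtain ⟨g⟩ := h
  set f0 : ℚ → Finset ℕ := fun q => ((g q : ↥X) : Finset ℕ) with hf0
  have hinj : Function.Injective f0 := by
    intro q q' hqq'
    exact g.injective (Subtype.val_injective hqq')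
  have hcard : ∀ q, (f0 q).card = k := fun q => hX _ (g q).2
  obtain ⟨e, _, c, hc⟩ := sun_key k f0 hinj hcard 0 1 one_pos
  refine ⟨e.ltEmbedding.trans g.toRelEmbedding, (c : Set ℕ), ?_⟩
  intro q q' hne
  have key := hc q q' hne
  rw [show ((e.ltEmbedding.trans g.toRelEmbedding) q : Finset ℕ) = f0 (e q) from rfl,
      show ((e.ltEmbedding.trans g.toRelEmbedding) q' : Finset ℕ) = f0 (e q') from rfl,
      ← Finset.coe_inter, key]
end

section
/- Let n ≥ 3 and let G be a simple graph on a countably infinite vertex set such that G contains no clique on n vertices and G has the Kₙ-free extension property: for all disjoint finite sets A, B of vertices such that A contains no clique on n−1 vertices, there exists a vertex v ∉ A ∪ B adjacent to every vertex of A and to no vertex of B. Then G does not have the galah property: there is a partition (C, D) of the vertex set of G such that the induced subgraph on C is not isomorphic to G and D contains no subset on which the induced subgraph is isomorphic to G. -/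
/-!
Fix a vertex `v` and split the vertices into the neighbourhood `N(v)` and its complement `C`.
In `G[C]` the vertex `v` is isolated, whereas the extension property gives every vertex of `G`
a neighbour, so `G[C] ≄ G`. A copy of `G` inside `N(v)` would contain a `K_{n-1}` (the extension
property builds cliques up to that size), and adding `v` would give a `K_n` in `G`.
-/

universe u

namespace SimpleGraph

variable {V : Type*} {G : SimpleGraph V}

theorem CliqueFree.induce_of_subset_neighborSet {n : ℕ} (h : G.CliqueFree (n + 1)) {v : V}
    {S : Set V} (hS : S ⊆ G.neighborSet v) : (G.induce S).CliqueFree n := by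
  have hN : G.CliqueFreeOn (Set.univ ∩ G.neighborSet v) n :=
    CliqueFreeOn.of_succ G h.cliqueFreeOn (Set.mem_univ v)
  rw [Set.univ_inter] at hN
  exact (cliqueFree_induce_iff G S n).mpr (CliqueFreeOn.subset G hS hN)

theorem Iso.exists_adj {W : Type*} {H : SimpleGraph W} (f : H ≃g G)
    (hG : ∀ u, ∃ w, G.Adj u w) (x : W) : ∃ y, H.Adj x y := by
  obtain ⟨w, hw⟩ := hG (f x)
  exact ⟨f.symm w, by simpa using f.symm.map_adj_iff.mpr hw⟩

theorem isEmpty_induce_compl_neighborSet_iso (hG : ∀ u, ∃ w, G.Adj u w) (v : V) :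
    IsEmpty (G.induce (G.neighborSet v)ᶜ ≃g G) := by
  refine ⟨fun f ↦ ?_⟩
  obtain ⟨⟨x, hx⟩, hvx⟩ := f.exists_adj hG ⟨v, G.irrefl⟩
  exact hx hvx

section Extension

variable {k : ℕ}
  (hext : ∀ A : Finset V, (¬ ∃ s ⊆ A, G.IsNClique k s) → ∃ v ∉ A, ∀ a ∈ A, G.Adj v a)
include hext

theorem exists_adj_forall_of_isNClique {m : ℕ} {s : Finset V} (hs : G.IsNClique m s)
    (hm : m < k) : ∃ v ∉ s, ∀ a ∈ s, G.Adj v a := by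
  refine hext s fun ⟨t, hts, ht⟩ ↦ ?_
  have := Finset.card_le_card hts
  rw [ht.card_eq, hs.card_eq] at this
  omega

theorem exists_isNClique_of_le {m : ℕ} (hm : m ≤ k) : ∃ s : Finset V, G.IsNClique m s := by
  classical
  induction m with
  | zero => exact ⟨∅, by simp⟩
  | succ m ih =>
    obtain ⟨s, hs⟩ := ih (by omega)
    obtain ⟨v, -, hv⟩ := exists_adj_forall_of_isNClique hext hs (by omega)
    exact ⟨insert v s, hs.insert hv⟩

theorem exists_adj_of_one_lt (hk : 1 < k) (u : V) : ∃ w, G.Adj u w := by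
  have hu : G.IsNClique 1 {u} := isNClique_singleton.mpr rfl
  obtain ⟨w, -, hw⟩ := exists_adj_forall_of_isNClique hext hu hk
  exact ⟨w, (hw u (Finset.mem_singleton_self u)).symm⟩

end Extension

end SimpleGraph

open SimpleGraph

theorem statement6_general (n : ℕ) (hn : 3 ≤ n) (V : Type u) [Infinite V]
    (G : SimpleGraph V) (hfree : G.CliqueFree n)
    (hext : ∀ A B : Finset V, Disjoint A B →
      (¬ ∃ s : Finset V, s ⊆ A ∧ G.IsNClique (n - 1) s) →
      ∃ v : V, v ∉ A ∧ v ∉ B ∧ (∀ a ∈ A, G.Adj v a) ∧ ∀ b ∈ B, ¬ G.Adj v b) :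
    ∃ C : Set V, ¬ Nonempty (G.induce C ≃g G) ∧
      ¬ ∃ S : Set V, S ⊆ Cᶜ ∧ Nonempty (G.induce S ≃g G) := by
  have hext' : ∀ A : Finset V, (¬ ∃ s ⊆ A, G.IsNClique (n - 1) s) →
      ∃ v ∉ A, ∀ a ∈ A, G.Adj v a := fun A hA ↦
    let ⟨v, hvA, _, hv, _⟩ := hext A ∅ (Finset.disjoint_empty_right A) hA
    ⟨v, hvA, hv⟩
  have hfree' : G.CliqueFree (n - 1 + 1) := by rwa [Nat.sub_add_cancel (by omega)]
  obtain ⟨v⟩ : Nonempty V := inferInstance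
  refine ⟨(G.neighborSet v)ᶜ, ?_, ?_⟩
  · exact not_nonempty_iff.mpr
      (isEmpty_induce_compl_neighborSet_iso (exists_adj_of_one_lt hext' (by omega)) v)
  · rintro ⟨S, hS, ⟨f⟩⟩
    rw [compl_compl] at hS
    obtain ⟨s, hs⟩ := exists_isNClique_of_le hext' le_rfl
    exact (hfree'.induce_of_subset_neighborSet hS).comap ⟨f.symm.toCopy⟩ s hs

/-- The generic `Kₙ`-free graph (`n ≥ 3`) does not have the galah property: there is a
partition `(C, Cᶜ)` of its vertex set such that the induced subgraph on `C` is not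
isomorphic to `G` and no subset of `Cᶜ` induces a subgraph isomorphic to `G`. -/
theorem statement6 (n : ℕ) (hn : 3 ≤ n) (V : Type u) [Countable V] [Infinite V]
    (G : SimpleGraph V) (hfree : G.CliqueFree n)
    (hext : ∀ A B : Finset V, Disjoint A B →
      (¬ ∃ s : Finset V, s ⊆ A ∧ G.IsNClique (n - 1) s) →
      ∃ v : V, v ∉ A ∧ v ∉ B ∧ (∀ a ∈ A, G.Adj v a) ∧ ∀ b ∈ B, ¬ G.Adj v b) :
    ∃ C : Set V, ¬ Nonempty (G.induce C ≃g G) ∧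
      ¬ ∃ S : Set V, S ⊆ Cᶜ ∧ Nonempty (G.induce S ≃g G) :=
  statement6_general n hn V G hfree hext
end

section
/- Let E be the structure with domain ℕ × ℕ and a single binary relation ∼ defined by (a, b) ∼ (c, d) iff a = c (an equivalence relation with infinitely many infinite classes). Then: (1) E is indivisible: for every partition (C, D) of ℕ × ℕ there exists an injection f : ℕ × ℕ → C with f(x) ∼ f(y) ↔ x ∼ y for all x, y, or an injection f : ℕ × ℕ → D with the same property; (2) E does not have the galah property: there exists a partition (C, D) of ℕ × ℕ such that there is no bijection g : ℕ × ℕ → C with g(x) ∼ g(y) ↔ x ∼ y for all x, y, and no injection h : ℕ × ℕ → D with h(x) ∼ h(y) ↔ x ∼ y for all x, y. -/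
/-!
Indivisibility: either infinitely many classes meet `C` in an infinite set, and these already
give a copy of `E` inside `C`, or only finitely many do, and then the remaining infinitely many
classes each meet `Cᶜ` in a cofinite set.

Failure of the galah property: take `C` to be the classes `≥ 2` together with the single point
`(1, 0)`. The class of `(1, 0)` in `C` is a singleton, while every class of `E` is infinite, so
`C ≇ E`; and `Cᶜ` meets only two classes, too few to hold a copy of `E`.
-/

theorem exists_copy_of_infinite_fibers {α β : Type*} (X : Set (α × β)) (S : Set α)
    (hS : S.Infinite) (hfiber : ∀ a ∈ S, {b | (a, b) ∈ X}.Infinite) :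
    ∃ f : ℕ × ℕ → ↥X, Function.Injective f ∧
      ∀ x y : ℕ × ℕ, ((f x : α × β).1 = (f y : α × β).1 ↔ x.1 = y.1) := by
  let e : ℕ ↪ S := hS.natEmbedding
  let g : ∀ n : ℕ, ℕ ↪ {b | ((e n : α), b) ∈ X} := fun n => (hfiber _ (e n).2).natEmbedding
  refine ⟨fun p => ⟨((e p.1 : α), (g p.1 p.2 : β)), (g p.1 p.2).2⟩, ?_, ?_⟩
  · rintro ⟨a, b⟩ ⟨a', b'⟩ h
    simp only [Subtype.mk.injEq, Prod.mk.injEq] at h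
    obtain rfl : a = a' := e.injective (Subtype.ext h.1)
    obtain rfl : b = b' := (g a).injective (Subtype.ext h.2)
    rfl
  · exact fun x y => ⟨fun h => e.injective (Subtype.ext h), fun h => by simp [h]⟩

theorem exists_copy_or_exists_copy_compl {α β : Type*} [Infinite α] [Infinite β]
    (C : Set (α × β)) :
    (∃ f : ℕ × ℕ → ↥C, Function.Injective f ∧
        ∀ x y : ℕ × ℕ, ((f x : α × β).1 = (f y : α × β).1 ↔ x.1 = y.1)) ∨
      (∃ f : ℕ × ℕ → ↥(Cᶜ), Function.Injective f ∧
        ∀ x y : ℕ × ℕ, ((f x : α × β).1 = (f y : α × β).1 ↔ x.1 = y.1)) := by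
  set S : Set α := {a | {b | (a, b) ∈ C}.Infinite}
  by_cases hS : S.Infinite
  · exact .inl (exists_copy_of_infinite_fibers C S hS fun _ ha => ha)
  · refine .inr (exists_copy_of_infinite_fibers Cᶜ Sᶜ (Set.not_infinite.mp hS).infinite_compl ?_)
    intro a ha
    exact (Set.not_infinite.mp ha).infinite_compl

theorem notMem_range_of_isolated {α β : Type*} {X : Set (α × β)} (g : ℕ × ℕ → ↥X)
    (hg : Function.Injective g)
    (hfst : ∀ x y : ℕ × ℕ, ((g x : α × β).1 = (g y : α × β).1 ↔ x.1 = y.1))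
    (p : ↥X) (hp : ∀ q : ↥X, (q : α × β).1 = (p : α × β).1 → q = p) :
    p ∉ Set.range g := by
  rintro ⟨⟨a, b⟩, hab⟩
  have hnext : g (a, b + 1) = g (a, b) := by
    rw [hab]
    exact hp _ (hab ▸ (hfst (a, b + 1) (a, b)).mpr rfl)
  simpa using hg hnext

theorem not_forall_fst_iff_of_fst_le_one (h : ℕ × ℕ → ℕ × ℕ) (hle : ∀ p, (h p).1 ≤ 1) :
    ¬ ∀ x y : ℕ × ℕ, ((h x).1 = (h y).1 ↔ x.1 = y.1) := by
  intro hfst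
  have h01 := (hfst (0, 0) (1, 0)).not.mpr (by simp)
  have h02 := (hfst (0, 0) (2, 0)).not.mpr (by simp)
  have h12 := (hfst (1, 0) (2, 0)).not.mpr (by simp)
  have := hle (0, 0); have := hle (1, 0); have := hle (2, 0)
  omega

/-- Let `E` be the structure on `ℕ × ℕ` with the equivalence relation
`(a, b) ∼ (c, d) ↔ a = c` (infinitely many infinite classes).  Then (1) `E` is
indivisible, and (2) `E` does not have the galah property. -/
theorem statement7 :
    (∀ C : Set (ℕ × ℕ),
      (∃ f : ℕ × ℕ → ↥C, Function.Injective f ∧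
        ∀ x y : ℕ × ℕ, ((f x : ℕ × ℕ).1 = (f y : ℕ × ℕ).1 ↔ x.1 = y.1)) ∨
      (∃ f : ℕ × ℕ → ↥(Cᶜ), Function.Injective f ∧
        ∀ x y : ℕ × ℕ, ((f x : ℕ × ℕ).1 = (f y : ℕ × ℕ).1 ↔ x.1 = y.1))) ∧
    (∃ C : Set (ℕ × ℕ),
      (¬ ∃ g : ℕ × ℕ → ↥C, Function.Bijective g ∧
        ∀ x y : ℕ × ℕ, ((g x : ℕ × ℕ).1 = (g y : ℕ × ℕ).1 ↔ x.1 = y.1)) ∧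
      (¬ ∃ h : ℕ × ℕ → ↥(Cᶜ), Function.Injective h ∧
        ∀ x y : ℕ × ℕ, ((h x : ℕ × ℕ).1 = (h y : ℕ × ℕ).1 ↔ x.1 = y.1))) := by
  refine ⟨exists_copy_or_exists_copy_compl, {p | 2 ≤ p.1 ∨ p = (1, 0)}, ?_, ?_⟩
  · rintro ⟨g, ⟨hinj, hsurj⟩, hfst⟩
    refine notMem_range_of_isolated g hinj hfst ⟨(1, 0), .inr rfl⟩ ?_ (hsurj _)
    rintro ⟨q, hq | rfl⟩ hq1
    · simp only at hq1
      omega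
    · rfl
  · rintro ⟨h, -, hfst⟩
    refine not_forall_fst_iff_of_fst_le_one (fun p => h p) (fun p => ?_) hfst
    have := (h p).2
    simp only [Set.mem_compl_iff, Set.mem_ofPred_eq, not_or] at this
    omega
end

section
/- Let S be a countable ultrahomogeneous structure in the language with one binary relation symbol < and one binary function symbol ∧, such that S is a meet-semilattice (< is a strict partial order in which any two elements a, b have a greatest lower bound a ∧ b) and the age of S is the class of all finite meet-semilattices (the generic meet-semilattice). Then S has the infinite sunflower property. -/
universe u x

attribute [local instance] Classical.propDecidable

namespace Sunflower9

variable {S : Type u} [SemilatticeInf S]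

def mClosed (D : Finset S) : Prop := ∀ a ∈ D, ∀ b ∈ D, a ⊓ b ∈ D

structure Legit (D Low Up : Finset S) : Prop where
  lowSub : Low ⊆ D
  upSub : Up ⊆ D
  dClosed : mClosed D
  lowDown : ∀ e ∈ D, ∀ l ∈ Low, e ≤ l → e ∈ Low
  upUp : ∀ e ∈ D, ∀ u ∈ Up, u ≤ e → e ∈ Up
  lowLeUp : ∀ l ∈ Low, ∀ u ∈ Up, l ≤ u
  disj : ∀ a ∈ Low, a ∉ Up
  upClosed : ∀ a ∈ Up, ∀ b ∈ Up, a ⊓ b ∈ Up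
  maxLow : ∀ d ∈ D, d ∉ Up → ∃ m, m ∈ Low ∧ m ≤ d ∧ ∀ l ∈ Low, l ≤ d → l ≤ m

def RSet (D Low Up : Finset S) : Set S :=
  {t | t ∉ D ∧ (∀ d ∈ D, (d ≤ t ↔ d ∈ Low)) ∧ (∀ d ∈ D, (t ≤ d ↔ d ∈ Up)) ∧
      ∀ d ∈ D, ¬ t ≤ d → (t ⊓ d ∈ Low ∧ ∀ l ∈ Low, l ≤ d → l ≤ t ⊓ d)}

variable {D Low Up : Finset S}

lemma RSet.notMem {t : S} (ht : t ∈ RSet D Low Up) : t ∉ D := ht.1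
lemma RSet.le_iff {t : S} (ht : t ∈ RSet D Low Up) : ∀ d ∈ D, (d ≤ t ↔ d ∈ Low) := ht.2.1
lemma RSet.ge_iff {t : S} (ht : t ∈ RSet D Low Up) : ∀ d ∈ D, (t ≤ d ↔ d ∈ Up) := ht.2.2.1
lemma RSet.meets {t : S} (ht : t ∈ RSet D Low Up) :
    ∀ d ∈ D, ¬ t ≤ d → (t ⊓ d ∈ Low ∧ ∀ l ∈ Low, l ≤ d → l ≤ t ⊓ d) := ht.2.2.2

lemma RSet.low_le {t : S} (ht : t ∈ RSet D Low Up) (hL : Legit D Low Up)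
    {l : S} (hl : l ∈ Low) : l ≤ t := (RSet.le_iff ht l (hL.lowSub hl)).2 hl

lemma RSet.le_up {t : S} (ht : t ∈ RSet D Low Up) (hL : Legit D Low Up)
    {u : S} (hu : u ∈ Up) : t ≤ u := (RSet.ge_iff ht u (hL.upSub hu)).2 hu

/-- Adding a realization to the base, above the new point. -/
lemma step_legit (hL : Legit D Low Up) {t : S} (ht : t ∈ RSet D Low Up) :
    Legit (insert t D) Low (insert t Up) ∧
      RSet (insert t D) Low (insert t Up) ⊆ RSet D Low Up \ {t} := by
  have htD := RSet.notMem ht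
  constructor
  · refine ⟨?_, ?_, ?_, ?_, ?_, ?_, ?_, ?_, ?_⟩
    · exact hL.lowSub.trans (Finset.subset_insert _ _)
    · intro u hu
      rcases Finset.mem_insert.1 hu with rfl | hu
      · exact Finset.mem_insert_self _ _
      · exact Finset.mem_insert_of_mem (hL.upSub hu)
    · intro a ha b hb
      have key : ∀ c ∈ D, t ⊓ c ∈ insert t D := by
        intro c hc
        by_cases h1 : t ≤ c
        · simp [inf_eq_left.2 h1]
        · by_cases h2 : c ≤ t
          · simp [inf_eq_right.2 h2, hc]
          · exact Finset.mem_insert_of_mem (hL.lowSub ((RSet.meets ht c hc h1).1))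
      rcases Finset.mem_insert.1 ha with ha' | ha'
      · subst ha'
        rcases Finset.mem_insert.1 hb with hb' | hb'
        · subst hb'; simp
        · exact key b hb'
      · rcases Finset.mem_insert.1 hb with hb' | hb'
        · subst hb'; rw [inf_comm]; exact key a ha'
        · exact Finset.mem_insert_of_mem (hL.dClosed a ha' b hb')
    · intro e he l hl hle
      rcases Finset.mem_insert.1 he with he' | he'
      · subst he'
        exact absurd (le_antisymm hle (RSet.low_le ht hL hl)) (by rintro h; rw [h] at htD; exact htD (hL.lowSub hl))
      · exact hL.lowDown e he' l hl hle
    · intro e he u hu hue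
      rcases Finset.mem_insert.1 he with he' | he'
      · subst he'; exact Finset.mem_insert_self _ _
      · rcases Finset.mem_insert.1 hu with hu' | hu'
        · subst hu'; exact Finset.mem_insert_of_mem ((RSet.ge_iff ht e he').1 hue)
        · exact Finset.mem_insert_of_mem (hL.upUp e he' u hu' hue)
    · intro l hl u hu
      rcases Finset.mem_insert.1 hu with hu' | hu'
      · subst hu'; exact RSet.low_le ht hL hl
      · exact hL.lowLeUp l hl u hu' 
    · intro a ha hmem
      rcases Finset.mem_insert.1 hmem with hmem' | hmem'
      · rw [hmem'] at ha; exact htD (hL.lowSub ha)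
      · exact hL.disj a ha hmem' 
    · intro a ha b hb
      rcases Finset.mem_insert.1 ha with ha' | ha'
      · subst ha'
        rcases Finset.mem_insert.1 hb with hb' | hb'
        · subst hb'; simp
        · rw [inf_eq_left.2 (RSet.le_up ht hL hb')]
          exact Finset.mem_insert_self _ _
      · rcases Finset.mem_insert.1 hb with hb' | hb'
        · subst hb'
          rw [inf_eq_right.2 (RSet.le_up ht hL ha')]
          exact Finset.mem_insert_self _ _
        · exact Finset.mem_insert_of_mem (hL.upClosed a ha' b hb')
    · intro d hd hdU
      rcases Finset.mem_insert.1 hd with hd' | hd'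
      · rw [hd'] at hdU; exact absurd (Finset.mem_insert_self _ _) hdU
      · exact hL.maxLow d hd' fun h => hdU (Finset.mem_insert_of_mem h)
  · intro t' ht'
    have ht'D : t' ∉ D := fun h => RSet.notMem ht' (Finset.mem_insert_of_mem h)
    have ht't : t' ≠ t := fun h => RSet.notMem ht' (h ▸ Finset.mem_insert_self _ _)
    refine ⟨⟨ht'D, ?_, ?_, ?_⟩, ht't⟩
    · intro d hd; exact RSet.le_iff ht' d (Finset.mem_insert_of_mem hd)
    · intro d hd
      rw [RSet.ge_iff ht' d (Finset.mem_insert_of_mem hd), Finset.mem_insert]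
      have : d ≠ t := by rintro rfl; exact htD hd
      simp [this]
    · intro d hd h
      exact RSet.meets ht' d (Finset.mem_insert_of_mem hd) h

variable (hNE : ∀ D Low Up : Finset S, Legit D Low Up → (RSet D Low Up).Nonempty)

include hNE in
/-- Avoiding a finite set. -/
lemma avoid (G : Finset S) :
    ∀ D Low Up : Finset S, Legit D Low Up →
      ∃ D' L' U' : Finset S, Legit D' L' U' ∧ RSet D' L' U' ⊆ RSet D Low Up ∧
        ∀ x ∈ G, x ∉ RSet D' L' U' := by
  classical
  induction G using Finset.induction_on with
  | empty =>
    intro D Low Up hL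
    exact ⟨D, Low, Up, hL, le_refl _, by simp⟩
  | @insert a G' ha IH =>
    intro D Low Up hL
    obtain ⟨D', L', U', hL', hsub, havoid⟩ := IH D Low Up hL
    by_cases haR : a ∈ RSet D' L' U'
    · obtain ⟨hL'', hsub'⟩ := step_legit hL' haR
      refine ⟨insert a D', L', insert a U', hL'', fun x hx => hsub (hsub' hx).1, ?_⟩
      intro x hx hmem
      rcases Finset.mem_insert.1 hx with rfl | hx
      · exact (hsub' hmem).2 rfl
      · exact havoid x hx (hsub' hmem).1
    · refine ⟨D', L', U', hL', hsub, ?_⟩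
      intro x hx
      rcases Finset.mem_insert.1 hx with rfl | hx
      · exact haR
      · exact havoid x hx

include hNE in
lemma exists_notin (hL : Legit D Low Up) (G : Finset S) :
    ∃ t ∈ RSet D Low Up, t ∉ G := by
  obtain ⟨D', L', U', hL', hsub, havoid⟩ := avoid hNE G D Low Up hL
  obtain ⟨t, ht⟩ := hNE D' L' U' hL'
  exact ⟨t, hsub ht, fun h => havoid t h ht⟩

include hNE in
lemma RSet_infinite (hL : Legit D Low Up) : (RSet D Low Up).Infinite := by
  intro hF
  obtain ⟨t, ht, htG⟩ := exists_notin hNE hL hF.toFinset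
  exact htG (hF.mem_toFinset.2 ht)


noncomputable def mf (hL : Legit D Low Up) (d : ↥D) : ↥D :=
  if h : (d : S) ∈ Up then d else
    ⟨(hL.maxLow d d.2 h).choose, hL.lowSub (hL.maxLow d d.2 h).choose_spec.1⟩

lemma mf_spec (hL : Legit D Low Up) (d : ↥D) (h : (d : S) ∉ Up) :
    (mf hL d : S) ∈ Low ∧ (mf hL d : S) ≤ (d : S) ∧
      ∀ l ∈ Low, l ≤ (d : S) → l ≤ (mf hL d : S) := by
  rw [mf, dif_neg h]
  exact (hL.maxLow d d.2 h).choose_spec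

def gadLe : Option ↥D → Option ↥D → Prop
  | some a, some b => (a : S) ≤ b
  | some a, none => (a : S) ∈ Low
  | none, some b => (b : S) ∈ Up
  | none, none => True

noncomputable def gadInf (hL : Legit D Low Up) : Option ↥D → Option ↥D → Option ↥D
  | some a, some b => some ⟨(a : S) ⊓ b, hL.dClosed _ a.2 _ b.2⟩
  | some a, none => if h : (a : S) ∈ Up then none else some (mf hL a)
  | none, some b => if h : (b : S) ∈ Up then none else some (mf hL b)
  | none, none => none

noncomputable def gadSL (hL : Legit D Low Up) : SemilatticeInf (Option ↥D) where
  le := gadLe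
  lt a b := gadLe a b ∧ ¬ gadLe b a
  lt_iff_le_not_ge a b := Iff.rfl
  le_refl a := by cases a with
    | none => trivial
    | some a => exact le_refl (a : S)
  le_trans a b c hab hbc := by
    cases a with
    | none => cases b with
      | none => cases c with
        | none => trivial
        | some c => exact hbc
      | some b => cases c with
        | none => trivial
        | some c => exact hL.upUp c c.2 b hab hbc
    | some a => cases b with
      | none => cases c with
        | none => trivial
        | some c => exact hL.lowLeUp _ hab _ hbc
      | some b => cases c with
        | none => exact hL.lowDown a a.2 b hbc hab
        | some c => exact le_trans hab hbc
  le_antisymm a b hab hba := by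
    cases a with
    | none => cases b with
      | none => rfl
      | some b => exact absurd hab (hL.disj _ hba)
    | some a => cases b with
      | none => exact absurd hba (hL.disj _ hab)
      | some b => exact congrArg some (Subtype.ext (le_antisymm hab hba))
  inf := gadInf hL
  inf_le_left a b := by
    cases a with
    | none => cases b with
      | none => trivial
      | some b =>
        show gadLe (if h : (b : S) ∈ Up then none else some (mf hL b)) none
        split
        · trivial
        · next h => exact (mf_spec hL b h).1
    | some a => cases b with
      | none =>
        show gadLe (if h : (a : S) ∈ Up then none else some (mf hL a)) (some a)
        split
        · next h => exact h
        · next h => exact (mf_spec hL a h).2.1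
      | some b => exact inf_le_left
  inf_le_right a b := by
    cases a with
    | none => cases b with
      | none => trivial
      | some b =>
        show gadLe (if h : (b : S) ∈ Up then none else some (mf hL b)) (some b)
        split
        · next h => exact h
        · next h => exact (mf_spec hL b h).2.1
    | some a => cases b with
      | none =>
        show gadLe (if h : (a : S) ∈ Up then none else some (mf hL a)) none
        split
        · trivial
        · next h => exact (mf_spec hL a h).1
      | some b => exact inf_le_right
  le_inf a b c hab hac := by
    cases a with
    | none => cases b with
      | none => cases c with
        | none => trivial
        | some c =>
          show gadLe none (if h : (c : S) ∈ Up then none else some (mf hL c))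
          split
          · trivial
          · next h => exact absurd hac h
      | some b => cases c with
        | none =>
          show gadLe none (if h : (b : S) ∈ Up then none else some (mf hL b))
          split
          · trivial
          · next h => exact absurd hab h
        | some c => exact hL.upClosed b hab c hac
    | some a => cases b with
      | none => cases c with
        | none => exact hab
        | some c =>
          show gadLe (some a) (if h : (c : S) ∈ Up then none else some (mf hL c))
          split
          · exact hab
          · next h => exact (mf_spec hL c h).2.2 _ hab hac
      | some b => cases c with
        | none =>
          show gadLe (some a) (if h : (b : S) ∈ Up then none else some (mf hL b))
          split
          · exact hac
          · next h => exact (mf_spec hL b h).2.2 _ hac hab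
        | some c => exact le_inf hab hac

lemma gadget
    (ultra : ∀ A B : Set S, A.Finite → B.Finite →
      (∀ a ∈ A, ∀ b ∈ A, a ⊓ b ∈ A) → (∀ a ∈ B, ∀ b ∈ B, a ⊓ b ∈ B) →
      ∀ e : ↥A ≃ ↥B,
        (∀ p q : ↥A, (p : S) < (q : S) ↔ (e p : S) < (e q : S)) →
        (∀ p q z : ↥A, (p : S) ⊓ (q : S) = (z : S) → (e p : S) ⊓ (e q : S) = (e z : S)) →
        ∃ g : S ≃o S, (∀ a b : S, g (a ⊓ b) = g a ⊓ g b) ∧ ∀ a : ↥A, g ↑a = ↑(e a))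
    (age : ∀ (Q : Type u) [SemilatticeInf Q] [Fintype Q],
      ∃ f : Q ↪o S, ∀ a b : Q, f (a ⊓ b) = f a ⊓ f b)
    (hL : Legit D Low Up) : (RSet D Low Up).Nonempty := by
  letI := gadSL hL
  obtain ⟨f, hf⟩ := age (Option ↥D)
  set φ : ↥D → S := fun d => f (some d) with hφ
  have hφinj : Function.Injective φ := fun d d' h =>
    Option.some.inj (f.injective h)
  have hfsome : ∀ d d' : ↥D, φ d ⊓ φ d' = φ ⟨(d : S) ⊓ (d' : S), hL.dClosed _ d.2 _ d'.2⟩ := by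
    intro d d'
    rw [hφ]
    dsimp only
    rw [← hf]
    rfl
  have hAm : ∀ a ∈ Set.range φ, ∀ b ∈ Set.range φ, a ⊓ b ∈ Set.range φ := by
    rintro a ⟨d, rfl⟩ b ⟨d', rfl⟩
    exact ⟨_, (hfsome d d').symm⟩
  have hBm : ∀ a ∈ (↑D : Set S), ∀ b ∈ (↑D : Set S), a ⊓ b ∈ (↑D : Set S) := by
    intro a ha b hb
    exact hL.dClosed a ha b hb
  set e1 : ↥D ≃ ↥(Set.range φ) := Equiv.ofInjective φ hφinj with he1
  have he1val : ∀ d : ↥D, ((e1 d : S)) = φ d := fun d => rfl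
  set e2 : ↥D ≃ ↥(↑D : Set S) := Equiv.subtypeEquivRight (fun x => by simp) with he2
  set e : ↥(Set.range φ) ≃ ↥(↑D : Set S) := e1.symm.trans e2 with he
  have hecomp : ∀ d : ↥D, ((e (e1 d) : S)) = (d : S) := by
    intro d
    rw [he]
    simp only [Equiv.trans_apply, Equiv.symm_apply_apply]
    rfl
  have hle_iff : ∀ d d' : ↥D, φ d ≤ φ d' ↔ (d : S) ≤ (d' : S) := by
    intro d d'
    constructor
    · intro h
      have := f.le_iff_le.1 h
      exact this
    · intro h
      exact f.le_iff_le.2 h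
  obtain ⟨g, hgmeet, hgA⟩ := ultra (Set.range φ) (↑D) (Set.finite_range φ)
    (D.finite_toSet) hAm hBm e
    (by
      intro p q
      obtain ⟨d, rfl⟩ := e1.surjective p
      obtain ⟨d', rfl⟩ := e1.surjective q
      rw [hecomp, hecomp, he1val, he1val]
      rw [lt_iff_le_not_ge, lt_iff_le_not_ge, hle_iff, hle_iff])
    (by
      intro p q z
      obtain ⟨d, rfl⟩ := e1.surjective p
      obtain ⟨d', rfl⟩ := e1.surjective q
      obtain ⟨d'', rfl⟩ := e1.surjective z
      rw [hecomp, hecomp, hecomp, he1val, he1val, he1val]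
      intro h
      rw [hfsome] at h
      exact congrArg Subtype.val (hφinj h))
  have hgφ : ∀ d : ↥D, g (φ d) = (d : S) := by
    intro d
    have := hgA (e1 d)
    rw [hecomp] at this
    exact this
  set t : S := g (f none) with ht
  have htne : ∀ d : ↥D, t ≠ (d : S) := by
    intro d h
    have h2 : g (f none) = g (φ d) := by rw [← ht, h, ← hgφ d]
    exact Option.some_ne_none d (f.injective (g.injective h2)).symm
  have hled : ∀ d : ↥D, ((d : S) ≤ t ↔ (d : S) ∈ Low) := by
    intro d
    exact Iff.trans (by rw [← hgφ d, ht]; exact g.le_iff_le : (d : S) ≤ t ↔ f (some d) ≤ f none) f.le_iff_le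
  have hged : ∀ d : ↥D, (t ≤ (d : S) ↔ (d : S) ∈ Up) := by
    intro d
    exact Iff.trans (by rw [← hgφ d, ht]; exact g.le_iff_le : t ≤ (d : S) ↔ f none ≤ f (some d)) f.le_iff_le
  refine ⟨t, ?_, ?_, ?_, ?_⟩
  · intro hmem
    exact htne ⟨t, hmem⟩ rfl
  · intro d hd
    exact hled ⟨d, hd⟩
  · intro d hd
    exact hged ⟨d, hd⟩
  · intro d hd hnle
    have hdU : d ∉ Up := fun h => hnle ((hged ⟨d, hd⟩).2 h)
    have hstep : f none ⊓ φ ⟨d, hd⟩ = φ (mf hL ⟨d, hd⟩) := by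
      have h1 : f none ⊓ f (some ⟨d, hd⟩) = f (none ⊓ some ⟨d, hd⟩) := (hf _ _).symm
      have h2 : (none ⊓ some ⟨d, hd⟩ : Option ↥D) = some (mf hL ⟨d, hd⟩) := by
        show gadInf hL none (some ⟨d, hd⟩) = some (mf hL ⟨d, hd⟩)
        rw [gadInf, dif_neg hdU]
      rw [hφ]; dsimp only; rw [h1, h2]
    have hinf : t ⊓ d = (mf hL ⟨d, hd⟩ : S) := by
      calc t ⊓ d = g (f none) ⊓ g (φ ⟨d, hd⟩) := by rw [← ht, hgφ]
        _ = g (f none ⊓ φ ⟨d, hd⟩) := (hgmeet _ _).symm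
        _ = g (φ (mf hL ⟨d, hd⟩)) := by rw [hstep]
        _ = (mf hL ⟨d, hd⟩ : S) := hgφ _
    rw [hinf]
    obtain ⟨h1, h2, h3⟩ := mf_spec hL ⟨d, hd⟩ hdU
    exact ⟨h1, h3⟩



section Key

variable {α : Type x} (v : S → Finset α)
variable (hNE : ∀ D Low Up : Finset S, Legit D Low Up → (RSet D Low Up).Nonempty)

def Good (c : Finset α) (D Low Up : Finset S) : Prop :=
  ∀ D' L' U' : Finset S, Legit D' L' U' → RSet D' L' U' ⊆ RSet D Low Up →
    {t | t ∈ RSet D' L' U' ∧ c ⊆ v t}.Infinite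

lemma legit_empty : Legit (∅ : Finset S) ∅ ∅ := by
  refine ⟨?_, ?_, ?_, ?_, ?_, ?_, ?_, ?_, ?_⟩ <;> simp [mClosed]

include hNE in
lemma good_empty : Good v (∅ : Finset α) (∅ : Finset S) ∅ ∅ := by
  intro D' L' U' hL' _
  have h : {t | t ∈ RSet D' L' U' ∧ (∅ : Finset α) ⊆ v t} = RSet D' L' U' := by
    ext t; simp
  rw [h]
  exact RSet_infinite hNE hL'

include hNE in
lemma exists_max (k : ℕ) (hv : ∀ s : S, (v s).card = k) :
    ∃ (c : Finset α) (D L U : Finset S), Legit D L U ∧ Good v c D L U ∧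
      ∀ (c' : Finset α) (D' L' U' : Finset S), Legit D' L' U' → Good v c' D' L' U' →
        c'.card ≤ c.card := by
  classical
  set P : ℕ → Prop := fun n => ∃ (c : Finset α) (D L U : Finset S),
    Legit D L U ∧ Good v c D L U ∧ c.card = n with hP
  have hP0 : P 0 := ⟨∅, ∅, ∅, ∅, legit_empty, good_empty (v := v) hNE, rfl⟩
  have hbd : ∀ n, P n → n ≤ k := by
    rintro n ⟨c, D, L, U, hL, hG, rfl⟩
    obtain ⟨t, _, htc⟩ := (hG D L U hL (subset_refl _)).nonempty
    exact le_trans (Finset.card_le_card htc) (le_of_eq (hv t))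
  have hPm : P (Nat.findGreatest P k) := Nat.findGreatest_spec (Nat.zero_le k) hP0
  obtain ⟨c, D, L, U, h1, h2, h3⟩ := hPm
  refine ⟨c, D, L, U, h1, h2, ?_⟩
  intro c' D' L' U' hL' hG'
  rw [h3]
  exact Nat.le_findGreatest (hbd _ ⟨c', D', L', U', hL', hG', rfl⟩)
    ⟨c', D', L', U', hL', hG', rfl⟩

include hNE in
lemma key {c : Finset α} {D0 L0 U0 : Finset S}
    (hmax : ∀ (c' : Finset α) (D' L' U' : Finset S), Legit D' L' U' → Good v c' D' L' U' →
      c'.card ≤ c.card)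
    (hGood : Good v c D0 L0 U0) :
    ∀ D L U : Finset S, Legit D L U → RSet D L U ⊆ RSet D0 L0 U0 →
      ∀ F : Finset α, ∃ t ∈ RSet D L U, c ⊆ v t ∧ v t ∩ F ⊆ c := by
  intro D L U hL hsub F
  by_contra hcon
  push_neg at hcon
  have shrink : ∀ j, j ∉ c → ∀ D3 L3 U3 : Finset S, Legit D3 L3 U3 →
      RSet D3 L3 U3 ⊆ RSet D L U →
      ∃ D5 L5 U5 : Finset S, Legit D5 L5 U5 ∧ RSet D5 L5 U5 ⊆ RSet D3 L3 U3 ∧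
        ∀ t ∈ RSet D5 L5 U5, ¬ insert j c ⊆ v t := by
    intro j hj D3 L3 U3 hL3 _
    have hng : ¬ Good v (insert j c) D3 L3 U3 := by
      intro hG
      have := hmax _ _ _ _ hL3 hG
      rw [Finset.card_insert_of_notMem hj] at this
      omega
    rw [Good] at hng
    push_neg at hng
    obtain ⟨D4, L4, U4, hL4, hsub4, hfin⟩ := hng
    obtain ⟨D5, L5, U5, hL5, hsub5, havoid⟩ := avoid hNE hfin.toFinset D4 L4 U4 hL4
    refine ⟨D5, L5, U5, hL5, fun t ht => hsub4 (hsub5 ht), ?_⟩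
    intro t ht hsubc
    exact havoid t (hfin.mem_toFinset.2 ⟨hsub5 ht, hsubc⟩) ht
  have main : ∀ F' : Finset α, ∃ D5 L5 U5 : Finset S, Legit D5 L5 U5 ∧
      RSet D5 L5 U5 ⊆ RSet D L U ∧
      ∀ t ∈ RSet D5 L5 U5, ∀ j ∈ F', j ∉ c → ¬ insert j c ⊆ v t := by
    intro F'
    induction F' using Finset.induction_on with
    | empty => exact ⟨D, L, U, hL, subset_refl _, by simp⟩
    | @insert j F'' hj IH =>
      obtain ⟨D5, L5, U5, hL5, hsub5, hprop⟩ := IH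
      by_cases hjc : j ∈ c
      · refine ⟨D5, L5, U5, hL5, hsub5, ?_⟩
        intro t ht j' hj' hj'c
        rcases Finset.mem_insert.1 hj' with h | h
        · exact absurd (h ▸ hjc) hj'c
        · exact hprop t ht j' h hj'c
      · obtain ⟨D6, L6, U6, hL6, hsub6, hprop6⟩ := shrink j hjc D5 L5 U5 hL5 hsub5
        refine ⟨D6, L6, U6, hL6, fun t ht => hsub5 (hsub6 ht), ?_⟩
        intro t ht j' hj' hj'c
        rcases Finset.mem_insert.1 hj' with h | h
        · subst h; exact hprop6 t ht
        · exact hprop t (hsub6 ht) j' h hj'c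
  obtain ⟨D5, L5, U5, hL5, hsub5, hprop⟩ := main F
  have hinf := hGood D5 L5 U5 hL5 (fun t ht => hsub (hsub5 ht))
  obtain ⟨t, ht, htc⟩ := hinf.nonempty
  have h1 := hcon t (hsub5 ht) htc
  obtain ⟨j, hjm, hjc⟩ := Finset.not_subset.1 h1
  have hjv : j ∈ v t := (Finset.mem_inter.1 hjm).1
  have hjF : j ∈ F := (Finset.mem_inter.1 hjm).2
  exact hprop t ht j hjF hjc (Finset.insert_subset hjv htc)

end Key

section Merged

variable {D0 L0 U0 : Finset S} {A : Finset S} {x : S} {g : S → S}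

lemma merged (hL0 : Legit D0 L0 U0) (hx : x ∉ A) (hA : mClosed A) (hAx : mClosed (insert x A))
    (hgR : ∀ a ∈ A, g a ∈ RSet D0 L0 U0)
    (hgmeet : ∀ a ∈ A, ∀ b ∈ A, g (a ⊓ b) = g a ⊓ g b)
    (hgle : ∀ a ∈ A, ∀ b ∈ A, (a ≤ b ↔ g a ≤ g b)) :
    Legit (D0 ∪ A.image g) (L0 ∪ (A.filter (· ≤ x)).image g)
        (U0 ∪ (A.filter (x ≤ ·)).image g) ∧
      RSet (D0 ∪ A.image g) (L0 ∪ (A.filter (· ≤ x)).image g)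
        (U0 ∪ (A.filter (x ≤ ·)).image g) ⊆ RSet D0 L0 U0 ∧
      ∀ t ∈ RSet (D0 ∪ A.image g) (L0 ∪ (A.filter (· ≤ x)).image g)
          (U0 ∪ (A.filter (x ≤ ·)).image g),
        (∀ a ∈ A, (a ≤ x ↔ g a ≤ t) ∧ (x ≤ a ↔ t ≤ g a)) ∧
        (∀ a ∈ A, ¬ x ≤ a → t ⊓ g a = g (x ⊓ a)) ∧
        (∀ a ∈ A, t ≠ g a) := by
  classical
  set B := A.image g with hB
  set LB := (A.filter (· ≤ x)).image g with hLB
  set UB := (A.filter (x ≤ ·)).image g with hUB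
  -- basic helpers
  have hginj : ∀ a ∈ A, ∀ b ∈ A, g a = g b → a = b := by
    intro a ha b hb h
    exact le_antisymm ((hgle a ha b hb).2 (le_of_eq h)) ((hgle b hb a ha).2 (le_of_eq h.symm))
  have hgD0 : ∀ a ∈ A, g a ∉ D0 := fun a ha => RSet.notMem (hgR a ha)
  have r2g : ∀ a ∈ A, ∀ d ∈ D0, (d ≤ g a ↔ d ∈ L0) := fun a ha => RSet.le_iff (hgR a ha)
  have r3g : ∀ a ∈ A, ∀ d ∈ D0, (g a ≤ d ↔ d ∈ U0) := fun a ha => RSet.ge_iff (hgR a ha)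
  have r5g : ∀ a ∈ A, ∀ l ∈ L0, l ≤ g a := fun a ha l hl => RSet.low_le (hgR a ha) hL0 hl
  have r6g : ∀ a ∈ A, ∀ u ∈ U0, g a ≤ u := fun a ha u hu => RSet.le_up (hgR a ha) hL0 hu
  have hxa : ∀ a ∈ A, ¬ x ≤ a → x ⊓ a ∈ A := by
    intro a ha h
    have := hAx x (Finset.mem_insert_self _ _) a (Finset.mem_insert_of_mem ha)
    rcases Finset.mem_insert.1 this with h' | h'
    · exact absurd (h' ▸ inf_le_right) h
    · exact h'
  have memB : ∀ a ∈ A, g a ∈ B := fun a ha => Finset.mem_image_of_mem g ha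
  have memLB : ∀ a ∈ A, a ≤ x → g a ∈ LB := fun a ha h =>
    Finset.mem_image_of_mem g (Finset.mem_filter.2 ⟨ha, h⟩)
  have memUB : ∀ a ∈ A, x ≤ a → g a ∈ UB := fun a ha h =>
    Finset.mem_image_of_mem g (Finset.mem_filter.2 ⟨ha, h⟩)
  have elimB : ∀ d ∈ B, ∃ a, a ∈ A ∧ g a = d := by
    intro d hd
    obtain ⟨a, ha, rfl⟩ := Finset.mem_image.1 hd
    exact ⟨a, ha, rfl⟩
  have elimLB : ∀ d ∈ LB, ∃ a, a ∈ A ∧ a ≤ x ∧ g a = d := by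
    intro d hd
    obtain ⟨a, ha, rfl⟩ := Finset.mem_image.1 hd
    exact ⟨a, (Finset.mem_filter.1 ha).1, (Finset.mem_filter.1 ha).2, rfl⟩
  have elimUB : ∀ d ∈ UB, ∃ a, a ∈ A ∧ x ≤ a ∧ g a = d := by
    intro d hd
    obtain ⟨a, ha, rfl⟩ := Finset.mem_image.1 hd
    exact ⟨a, (Finset.mem_filter.1 ha).1, (Finset.mem_filter.1 ha).2, rfl⟩
  have hBD0 : ∀ d ∈ B, d ∉ D0 := by
    intro d hd
    obtain ⟨a, ha, rfl⟩ := elimB d hd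
    exact hgD0 a ha
  have hmaxg : ∀ a ∈ A, ∀ l ∈ L0 ∪ LB, l ≤ g a → l ≤ g (x ⊓ a) → True := fun _ _ _ _ _ _ => trivial
  clear hmaxg
  have hmaxg : ∀ a ∈ A, ¬ x ≤ a → ∀ l ∈ L0 ∪ LB, l ≤ g a → l ≤ g (x ⊓ a) := by
    intro a ha hxna l hl hla
    rcases Finset.mem_union.1 hl with hl' | hl'
    · exact r5g _ (hxa a ha hxna) l hl'
    · obtain ⟨a', ha', hax, rfl⟩ := elimLB l hl'
      have h1 : a' ≤ a := (hgle a' ha' a ha).2 hla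
      have h2 : a' ≤ x ⊓ a := le_inf hax h1
      exact (hgle a' ha' _ (hxa a ha hxna)).1 h2
  have hLegit : Legit (D0 ∪ B) (L0 ∪ LB) (U0 ∪ UB) := by
    refine ⟨?_, ?_, ?_, ?_, ?_, ?_, ?_, ?_, ?_⟩
    · -- lowSub
      intro l hl
      rcases Finset.mem_union.1 hl with h | h
      · exact Finset.mem_union_left _ (hL0.lowSub h)
      · obtain ⟨a, ha, _, rfl⟩ := elimLB l h
        exact Finset.mem_union_right _ (memB a ha)
    · -- upSub
      intro u hu
      rcases Finset.mem_union.1 hu with h | h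
      · exact Finset.mem_union_left _ (hL0.upSub h)
      · obtain ⟨a, ha, _, rfl⟩ := elimUB u h
        exact Finset.mem_union_right _ (memB a ha)
    · -- dClosed
      intro p hp q hq
      rcases Finset.mem_union.1 hp with hp' | hp'
      · rcases Finset.mem_union.1 hq with hq' | hq'
        · exact Finset.mem_union_left _ (hL0.dClosed p hp' q hq')
        · obtain ⟨a, ha, rfl⟩ := elimB q hq'
          by_cases h : g a ≤ p
          · rw [inf_eq_right.2 h]
            exact Finset.mem_union_right _ (memB a ha)
          · rw [inf_comm]
            exact Finset.mem_union_left _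
              (hL0.lowSub ((RSet.meets (hgR a ha) p hp' h).1))
      · obtain ⟨a, ha, rfl⟩ := elimB p hp'
        rcases Finset.mem_union.1 hq with hq' | hq'
        · by_cases h : g a ≤ q
          · rw [inf_eq_left.2 h]
            exact Finset.mem_union_right _ (memB a ha)
          · exact Finset.mem_union_left _
              (hL0.lowSub ((RSet.meets (hgR a ha) q hq' h).1))
        · obtain ⟨a', ha', rfl⟩ := elimB q hq'
          rw [← hgmeet a ha a' ha']
          exact Finset.mem_union_right _ (memB _ (hA a ha a' ha'))
    · -- lowDown
      intro e he l hl hle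
      rcases Finset.mem_union.1 hl with hl' | hl'
      · rcases Finset.mem_union.1 he with he' | he'
        · exact Finset.mem_union_left _ (hL0.lowDown e he' l hl' hle)
        · obtain ⟨a, ha, rfl⟩ := elimB e he'
          exact absurd (le_antisymm hle (r5g a ha l hl') ▸ (hL0.lowSub hl'))
            (hgD0 a ha)
      · obtain ⟨a', ha', hax, rfl⟩ := elimLB l hl'
        rcases Finset.mem_union.1 he with he' | he'
        · exact Finset.mem_union_left _ ((r2g a' ha' e he').1 hle)
        · obtain ⟨a, ha, rfl⟩ := elimB e he'
          have : a ≤ a' := (hgle a ha a' ha').2 hle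
          exact Finset.mem_union_right _ (memLB a ha (le_trans this hax))
    · -- upUp
      intro e he u hu hue
      rcases Finset.mem_union.1 hu with hu' | hu'
      · rcases Finset.mem_union.1 he with he' | he'
        · exact Finset.mem_union_left _ (hL0.upUp e he' u hu' hue)
        · obtain ⟨a, ha, rfl⟩ := elimB e he'
          exact absurd (le_antisymm (r6g a ha u hu') hue ▸ (hL0.upSub hu'))
            (hgD0 a ha)
      · obtain ⟨a', ha', hax, rfl⟩ := elimUB u hu'
        rcases Finset.mem_union.1 he with he' | he'
        · exact Finset.mem_union_left _ ((r3g a' ha' e he').1 hue)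
        · obtain ⟨a, ha, rfl⟩ := elimB e he'
          have : a' ≤ a := (hgle a' ha' a ha).2 hue
          exact Finset.mem_union_right _ (memUB a ha (le_trans hax this))
    · -- lowLeUp
      intro l hl u hu
      rcases Finset.mem_union.1 hl with hl' | hl'
      · rcases Finset.mem_union.1 hu with hu' | hu'
        · exact hL0.lowLeUp l hl' u hu'
        · obtain ⟨a, ha, _, rfl⟩ := elimUB u hu'
          exact r5g a ha l hl'
      · obtain ⟨a', ha', hax, rfl⟩ := elimLB l hl'
        rcases Finset.mem_union.1 hu with hu' | hu'
        · exact r6g a' ha' u hu'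
        · obtain ⟨a, ha, hxa', rfl⟩ := elimUB u hu'
          exact (hgle a' ha' a ha).1 (le_trans hax hxa')
    · -- disj
      intro p hp hup
      rcases Finset.mem_union.1 hp with hp' | hp'
      · rcases Finset.mem_union.1 hup with hu' | hu'
        · exact hL0.disj p hp' hu'
        · obtain ⟨a, ha, _, rfl⟩ := elimUB p hu'
          exact hgD0 a ha (hL0.lowSub hp')
      · obtain ⟨a, ha, hax, rfl⟩ := elimLB p hp'
        rcases Finset.mem_union.1 hup with hu' | hu'
        · exact hgD0 a ha (hL0.upSub hu')
        · obtain ⟨a', ha', hxa', heq⟩ := elimUB _ hu'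
          have : a' = a := hginj a' ha' a ha heq
          subst this
          exact hx (le_antisymm hxa' hax ▸ ha)
    · -- upClosed
      intro p hp q hq
      rcases Finset.mem_union.1 hp with hp' | hp'
      · rcases Finset.mem_union.1 hq with hq' | hq'
        · exact Finset.mem_union_left _ (hL0.upClosed p hp' q hq')
        · obtain ⟨a, ha, hxa', rfl⟩ := elimUB q hq'
          rw [inf_eq_right.2 (r6g a ha p hp')]
          exact Finset.mem_union_right _ (memUB a ha hxa')
      · obtain ⟨a, ha, hxa', rfl⟩ := elimUB p hp'
        rcases Finset.mem_union.1 hq with hq' | hq'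
        · rw [inf_eq_left.2 (r6g a ha q hq')]
          exact Finset.mem_union_right _ (memUB a ha hxa')
        · obtain ⟨a', ha', hxa'', rfl⟩ := elimUB q hq'
          rw [← hgmeet a ha a' ha']
          exact Finset.mem_union_right _ (memUB _ (hA a ha a' ha') (le_inf hxa' hxa''))
    · -- maxLow
      intro d hd hdU
      rcases Finset.mem_union.1 hd with hd' | hd'
      · have hdU0 : d ∉ U0 := fun h => hdU (Finset.mem_union_left _ h)
        obtain ⟨m, hm, hmd, hmax⟩ := hL0.maxLow d hd' hdU0
        refine ⟨m, Finset.mem_union_left _ hm, hmd, ?_⟩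
        intro l hl hld
        rcases Finset.mem_union.1 hl with hl' | hl'
        · exact hmax l hl' hld
        · obtain ⟨a', ha', _, rfl⟩ := elimLB l hl'
          exact absurd (Finset.mem_union_left _ ((r3g a' ha' d hd').1 hld)) hdU
      · obtain ⟨a, ha, rfl⟩ := elimB d hd'
        have hxna : ¬ x ≤ a := fun h => hdU (Finset.mem_union_right _ (memUB a ha h))
        refine ⟨g (x ⊓ a), Finset.mem_union_right _
          (memLB _ (hxa a ha hxna) inf_le_left), ?_, ?_⟩
        · exact (hgle _ (hxa a ha hxna) a ha).1 inf_le_right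
        · exact hmaxg a ha hxna
  refine ⟨hLegit, ?_, ?_⟩
  · -- subset
    intro t ht
    have tn : t ∉ D0 := fun h => RSet.notMem ht (Finset.mem_union_left _ h)
    refine ⟨tn, ?_, ?_, ?_⟩
    · intro d hd
      rw [RSet.le_iff ht d (Finset.mem_union_left _ hd)]
      constructor
      · intro h
        rcases Finset.mem_union.1 h with h' | h'
        · exact h'
        · obtain ⟨a, ha, _, rfl⟩ := elimLB d h'
          exact absurd hd (hgD0 a ha)
      · exact fun h => Finset.mem_union_left _ h
    · intro d hd
      rw [RSet.ge_iff ht d (Finset.mem_union_left _ hd)]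
      constructor
      · intro h
        rcases Finset.mem_union.1 h with h' | h'
        · exact h'
        · obtain ⟨a, ha, _, rfl⟩ := elimUB d h'
          exact absurd hd (hgD0 a ha)
      · exact fun h => Finset.mem_union_left _ h
    · intro d hd hnle
      obtain ⟨hmem, hmax⟩ := RSet.meets ht d (Finset.mem_union_left _ hd) hnle
      constructor
      · rcases Finset.mem_union.1 hmem with h' | h'
        · exact h'
        · obtain ⟨a', ha', _, heq⟩ := elimLB _ h'
          have h2 : g a' ≤ d := heq ▸ inf_le_right
          have h3 : d ∈ U0 := (r3g a' ha' d hd).1 h2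
          exact absurd ((RSet.ge_iff ht d (Finset.mem_union_left _ hd)).2
            (Finset.mem_union_left _ h3)) hnle
      · intro l hl hld
        exact hmax l (Finset.mem_union_left _ hl) hld
  · -- extra properties
    intro t ht
    have hiff : ∀ a ∈ A, (a ≤ x ↔ g a ≤ t) ∧ (x ≤ a ↔ t ≤ g a) := by
      intro a ha
      constructor
      · rw [RSet.le_iff ht (g a) (Finset.mem_union_right _ (memB a ha))]
        constructor
        · intro h; exact Finset.mem_union_right _ (memLB a ha h)
        · intro h
          rcases Finset.mem_union.1 h with h' | h'
          · exact absurd (hL0.lowSub h') (hgD0 a ha)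
          · obtain ⟨a', ha', hax, heq⟩ := elimLB _ h'
            exact (hginj a' ha' a ha heq) ▸ hax
      · rw [RSet.ge_iff ht (g a) (Finset.mem_union_right _ (memB a ha))]
        constructor
        · intro h; exact Finset.mem_union_right _ (memUB a ha h)
        · intro h
          rcases Finset.mem_union.1 h with h' | h'
          · exact absurd (hL0.upSub h') (hgD0 a ha)
          · obtain ⟨a', ha', hax, heq⟩ := elimUB _ h'
            exact (hginj a' ha' a ha heq) ▸ hax
    refine ⟨hiff, ?_, ?_⟩
    · intro a ha hxna
      have hnt : ¬ t ≤ g a := fun h => hxna (((hiff a ha).2).2 h)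
      obtain ⟨hmem, hmax⟩ := RSet.meets ht (g a)
        (Finset.mem_union_right _ (memB a ha)) hnt
      refine le_antisymm ?_ ?_
      · exact hmaxg a ha hxna _ hmem inf_le_right
      · exact hmax _ (Finset.mem_union_right _ (memLB _ (hxa a ha hxna) inf_le_left))
          ((hgle _ (hxa a ha hxna) a ha).1 inf_le_right)
    · intro a ha h
      exact RSet.notMem ht (h ▸ Finset.mem_union_right _ (memB a ha))

end Merged

section Build

variable {α : Type x} (v : S → Finset α) (c : Finset α) (D0 L0 U0 : Finset S)

structure GState (v : S → Finset α) (c : Finset α) (D0 L0 U0 : Finset S) where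
  A : Finset S
  g : S → S
  hA : mClosed A
  hmeet : ∀ a ∈ A, ∀ b ∈ A, g (a ⊓ b) = g a ⊓ g b
  hle : ∀ a ∈ A, ∀ b ∈ A, (a ≤ b ↔ g a ≤ g b)
  hR : ∀ a ∈ A, g a ∈ RSet D0 L0 U0
  hc : ∀ a ∈ A, c ⊆ v (g a)
  hsun : ∀ a ∈ A, ∀ b ∈ A, a ≠ b → v (g a) ∩ v (g b) = c

variable (hL0 : Legit D0 L0 U0)
variable (hkey : ∀ D L U : Finset S, Legit D L U → RSet D L U ⊆ RSet D0 L0 U0 →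
    ∀ F : Finset α, ∃ t ∈ RSet D L U, c ⊆ v t ∧ v t ∩ F ⊆ c)

include hL0 hkey in
lemma oneStep (st : GState v c D0 L0 U0) (x : S) (hx : x ∉ st.A)
    (hAx : mClosed (insert x st.A)) :
    ∃ st' : GState v c D0 L0 U0, st'.A = insert x st.A ∧ ∀ a ∈ st.A, st'.g a = st.g a := by
  classical
  obtain ⟨hLg, hsub, hext⟩ := merged hL0 hx st.hA hAx st.hR st.hmeet st.hle
  obtain ⟨t, htR, htc, htF⟩ := hkey _ _ _ hLg hsub (st.A.biUnion (fun a => v (st.g a)))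
  obtain ⟨hiff, hmeetx, hne⟩ := hext t htR
  set g' := Function.update st.g x t with hg'
  have hga : ∀ a ∈ st.A, g' a = st.g a := by
    intro a ha
    exact Function.update_of_ne (fun h => hx (by rw [← h]; exact ha)) _ _
  have hgx : g' x = t := Function.update_self _ _ _
  have hxbA : ∀ b ∈ st.A, ¬ x ≤ b → x ⊓ b ∈ st.A := by
    intro b hb h
    have := hAx x (Finset.mem_insert_self _ _) b (Finset.mem_insert_of_mem hb)
    rcases Finset.mem_insert.1 this with h' | h'
    · exact absurd (h' ▸ inf_le_right) h
    · exact h'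
  have hcase : ∀ b ∈ st.A, g' (x ⊓ b) = g' x ⊓ g' b := by
    intro b hb
    rw [hgx, hga b hb]
    by_cases hxb : x ≤ b
    · rw [inf_eq_left.2 hxb, hgx, inf_eq_left.2 ((hiff b hb).2.1 hxb)]
    · rw [hga _ (hxbA b hb hxb), hmeetx b hb hxb]
  have hsunx : ∀ b ∈ st.A, v t ∩ v (st.g b) = c := by
    intro b hb
    refine subset_antisymm ?_ (Finset.subset_inter htc (st.hc b hb))
    intro j hj
    have hj1 : j ∈ v t := (Finset.mem_inter.1 hj).1
    have hj2 : j ∈ v (st.g b) := (Finset.mem_inter.1 hj).2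
    exact htF (Finset.mem_inter.2 ⟨hj1, Finset.mem_biUnion.2 ⟨b, hb, hj2⟩⟩)
  refine ⟨⟨insert x st.A, g', hAx, ?_, ?_, ?_, ?_, ?_⟩, rfl, hga⟩
  · -- hmeet
    intro a ha b hb
    rcases Finset.mem_insert.1 ha with ha' | ha'
    · subst ha'
      rcases Finset.mem_insert.1 hb with hb' | hb'
      · subst hb'; simp [inf_idem]
      · exact hcase b hb'
    · rcases Finset.mem_insert.1 hb with hb' | hb'
      · subst hb'
        rw [inf_comm, inf_comm (g' a) (g' b)]
        exact hcase a ha'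
      · rw [hga a ha', hga b hb', hga _ (st.hA a ha' b hb'), st.hmeet a ha' b hb']
  · -- hle
    intro a ha b hb
    rcases Finset.mem_insert.1 ha with ha' | ha'
    · subst ha'
      rcases Finset.mem_insert.1 hb with hb' | hb'
      · subst hb'; simp
      · rw [hgx, hga b hb']
        exact (hiff b hb').2
    · rcases Finset.mem_insert.1 hb with hb' | hb'
      · subst hb'
        rw [hgx, hga a ha']
        exact (hiff a ha').1
      · rw [hga a ha', hga b hb']
        exact st.hle a ha' b hb'
  · -- hR
    intro a ha
    rcases Finset.mem_insert.1 ha with ha' | ha'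
    · subst ha'; rw [hgx]; exact hsub htR
    · rw [hga a ha']; exact st.hR a ha'
  · -- hc
    intro a ha
    rcases Finset.mem_insert.1 ha with ha' | ha'
    · subst ha'; rw [hgx]; exact htc
    · rw [hga a ha']; exact st.hc a ha'
  · -- hsun
    intro a ha b hb hab
    rcases Finset.mem_insert.1 ha with ha' | ha'
    · subst ha'
      rcases Finset.mem_insert.1 hb with hb' | hb'
      · exact absurd hb'.symm hab
      · rw [hgx, hga b hb']
        exact hsunx b hb'
    · rcases Finset.mem_insert.1 hb with hb' | hb'
      · subst hb'
        rw [hgx, hga a ha', Finset.inter_comm]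
        exact hsunx a ha'
      · rw [hga a ha', hga b hb']
        exact st.hsun a ha' b hb' hab

include hL0 hkey in
lemma extendMany (st : GState v c D0 L0 U0) (Bn : Finset S) (hBn : mClosed Bn)
    (hsubA : st.A ⊆ Bn) :
    ∃ st' : GState v c D0 L0 U0, st'.A = Bn ∧ ∀ a ∈ st.A, st'.g a = st.g a := by
  classical
  suffices H : ∀ n (st : GState v c D0 L0 U0), st.A ⊆ Bn → (Bn \ st.A).card = n →
      ∃ st' : GState v c D0 L0 U0, st'.A = Bn ∧ ∀ a ∈ st.A, st'.g a = st.g a by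
    exact H _ st hsubA rfl
  intro n
  induction n using Nat.strong_induction_on with
  | _ n IH =>
    intro st hsub hcard
    by_cases hEq : st.A = Bn
    · exact ⟨st, hEq, fun a _ => rfl⟩
    · have hne : (Bn \ st.A).Nonempty := by
        rw [Finset.sdiff_nonempty]
        intro h
        exact hEq (Finset.Subset.antisymm hsub h)
      obtain ⟨y, hy, hymin⟩ : ∃ y ∈ Bn \ st.A, ∀ z ∈ Bn \ st.A, ¬ z < y := by
        obtain ⟨y, hy, hm⟩ := Finset.exists_minimal hne
        exact ⟨y, hy, fun z hz hlt => lt_irrefl _ (lt_of_lt_of_le hlt (hm hz hlt.le))⟩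
      have hyB : y ∈ Bn := (Finset.mem_sdiff.1 hy).1
      have hyA : y ∉ st.A := (Finset.mem_sdiff.1 hy).2
      have hins : mClosed (insert y st.A) := by
        have hkey2 : ∀ b ∈ st.A, y ⊓ b ∈ insert y st.A := by
          intro b hb
          by_cases h : y ⊓ b ∈ st.A
          · exact Finset.mem_insert_of_mem h
          · have hyb : y ⊓ b ∈ Bn := hBn y hyB b (hsub hb)
            have : ¬ y ⊓ b < y := hymin _ (Finset.mem_sdiff.2 ⟨hyb, h⟩)
            have heq : y ⊓ b = y := by
              rcases lt_or_eq_of_le (inf_le_left : y ⊓ b ≤ y) with h' | h'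
              · exact absurd h' this
              · exact h'
            rw [heq]; exact Finset.mem_insert_self _ _
        intro a ha b hb
        rcases Finset.mem_insert.1 ha with ha' | ha'
        · subst ha'
          rcases Finset.mem_insert.1 hb with hb' | hb'
          · subst hb'; simp
          · exact hkey2 b hb'
        · rcases Finset.mem_insert.1 hb with hb' | hb'
          · subst hb'
            rw [inf_comm]
            exact hkey2 a ha'
          · exact Finset.mem_insert_of_mem (st.hA a ha' b hb')
      obtain ⟨st1, hA1, hg1⟩ := oneStep v c D0 L0 U0 hL0 hkey st y hyA hins
      have hsub1 : st1.A ⊆ Bn := by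
        rw [hA1]
        exact Finset.insert_subset hyB hsub
      have hlt : (Bn \ st1.A).card < n := by
        rw [← hcard]
        apply Finset.card_lt_card
        rw [hA1]
        constructor
        · intro z hz
          rw [Finset.mem_sdiff] at hz ⊢
          exact ⟨hz.1, fun h => hz.2 (Finset.mem_insert_of_mem h)⟩
        · intro hcon
          have := hcon hy
          rw [Finset.mem_sdiff] at this
          exact this.2 (Finset.mem_insert_self _ _)
      obtain ⟨st2, hA2, hg2⟩ := IH _ hlt st1 hsub1 rfl
      refine ⟨st2, hA2, ?_⟩
      intro a ha
      rw [hg2 a (hA1 ▸ Finset.mem_insert_of_mem ha), hg1 a ha]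

noncomputable def mcl (G : Finset S) : Finset S :=
  ((G.powerset.filter Finset.Nonempty).attach).image
    (fun T => T.1.inf' (Finset.mem_filter.1 T.2).2 id)

lemma subset_mcl (G : Finset S) : G ⊆ mcl G := by
  intro a ha
  have hmem : ({a} : Finset S) ∈ G.powerset.filter Finset.Nonempty := by
    rw [Finset.mem_filter, Finset.mem_powerset]
    exact ⟨Finset.singleton_subset_iff.2 ha, Finset.singleton_nonempty a⟩
  refine Finset.mem_image.2 ⟨⟨{a}, hmem⟩, Finset.mem_attach _ _, ?_⟩
  simp

lemma mcl_closed (G : Finset S) : mClosed (mcl G) := by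
  intro p hp q hq
  obtain ⟨⟨T1, hT1⟩, _, rfl⟩ := Finset.mem_image.1 hp
  obtain ⟨⟨T2, hT2⟩, _, rfl⟩ := Finset.mem_image.1 hq
  have hT1' := Finset.mem_filter.1 hT1
  have hT2' := Finset.mem_filter.1 hT2
  have hmem : T1 ∪ T2 ∈ G.powerset.filter Finset.Nonempty := by
    rw [Finset.mem_filter, Finset.mem_powerset]
    exact ⟨Finset.union_subset (Finset.mem_powerset.1 hT1'.1) (Finset.mem_powerset.1 hT2'.1),
      Finset.Nonempty.inl hT1'.2⟩
  refine Finset.mem_image.2 ⟨⟨T1 ∪ T2, hmem⟩, Finset.mem_attach _ _, ?_⟩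
  dsimp only
  rw [Finset.inf'_union hT1'.2 hT2'.2]

variable (σ : ℕ ≃ S)

noncomputable def state0 : GState v c D0 L0 U0 :=
  ⟨∅, fun _ => σ 0, by simp [mClosed], by simp, by simp, by simp, by simp, by simp⟩

noncomputable def states : ℕ → GState v c D0 L0 U0
  | 0 => state0 v c D0 L0 U0 σ
  | n + 1 => (extendMany v c D0 L0 U0 hL0 hkey (states n)
      (mcl (insert (σ n) (states n).A)) (mcl_closed _)
      ((Finset.subset_insert _ _).trans (subset_mcl _))).choose

lemma states_spec (n : ℕ) :
    (states v c D0 L0 U0 hL0 hkey σ (n + 1)).A =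
        mcl (insert (σ n) ((states v c D0 L0 U0 hL0 hkey σ n)).A) ∧
      ∀ a ∈ (states v c D0 L0 U0 hL0 hkey σ n).A,
        (states v c D0 L0 U0 hL0 hkey σ (n + 1)).g a =
          (states v c D0 L0 U0 hL0 hkey σ n).g a :=
  (extendMany v c D0 L0 U0 hL0 hkey (states v c D0 L0 U0 hL0 hkey σ n)
      (mcl (insert (σ n) (states v c D0 L0 U0 hL0 hkey σ n).A)) (mcl_closed _)
      ((Finset.subset_insert _ _).trans (subset_mcl _))).choose_spec

lemma states_mono_le {m n : ℕ} (h : m ≤ n) :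
    (states v c D0 L0 U0 hL0 hkey σ m).A ⊆ (states v c D0 L0 U0 hL0 hkey σ n).A := by
  induction n with
  | zero => rw [Nat.le_zero.1 h]
  | succ n IHn =>
    rcases Nat.lt_or_ge m (n + 1) with h' | h'
    · intro a ha
      rw [(states_spec v c D0 L0 U0 hL0 hkey σ n).1]
      exact subset_mcl _ (Finset.mem_insert_of_mem (IHn (Nat.lt_succ_iff.1 h') ha))
    · rw [Nat.le_antisymm h h']

lemma states_agree {m n : ℕ} (h : m ≤ n) :
    ∀ a ∈ (states v c D0 L0 U0 hL0 hkey σ m).A,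
      (states v c D0 L0 U0 hL0 hkey σ n).g a = (states v c D0 L0 U0 hL0 hkey σ m).g a := by
  induction n with
  | zero =>
    intro a ha
    rw [Nat.le_zero.1 h]
  | succ n IHn =>
    intro a ha
    rcases Nat.lt_or_ge m (n + 1) with h' | h'
    · have hm := Nat.lt_succ_iff.1 h'
      rw [(states_spec v c D0 L0 U0 hL0 hkey σ n).2 a
        (states_mono_le v c D0 L0 U0 hL0 hkey σ hm ha)]
      exact IHn hm a ha
    · rw [Nat.le_antisymm h h']

lemma mem_states (s : S) :
    s ∈ (states v c D0 L0 U0 hL0 hkey σ (σ.symm s + 1)).A := by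
  rw [(states_spec v c D0 L0 U0 hL0 hkey σ (σ.symm s)).1]
  apply subset_mcl
  rw [Equiv.apply_symm_apply]
  exact Finset.mem_insert_self _ _

noncomputable def gfin : S → S :=
  fun s => (states v c D0 L0 U0 hL0 hkey σ (σ.symm s + 1)).g s

lemma glevel (n : ℕ) (s : S) (hs : s ∈ (states v c D0 L0 U0 hL0 hkey σ n).A) :
    (states v c D0 L0 U0 hL0 hkey σ n).g s = gfin v c D0 L0 U0 hL0 hkey σ s := by
  set m := σ.symm s + 1 with hm
  have h1 := states_agree v c D0 L0 U0 hL0 hkey σ (le_max_left n m) s hs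
  have h2 := states_agree v c D0 L0 U0 hL0 hkey σ (le_max_right n m) s
    (mem_states v c D0 L0 U0 hL0 hkey σ s)
  exact h1.symm.trans h2

lemma build_final :
    (∀ a b : S, gfin v c D0 L0 U0 hL0 hkey σ (a ⊓ b) =
        gfin v c D0 L0 U0 hL0 hkey σ a ⊓ gfin v c D0 L0 U0 hL0 hkey σ b) ∧
      (∀ a b : S, a ≤ b ↔ gfin v c D0 L0 U0 hL0 hkey σ a ≤ gfin v c D0 L0 U0 hL0 hkey σ b) ∧
      (∀ a b : S, a ≠ b →
        v (gfin v c D0 L0 U0 hL0 hkey σ a) ∩ v (gfin v c D0 L0 U0 hL0 hkey σ b) = c) := by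
  have hmem : ∀ a b : S, ∃ n, a ∈ (states v c D0 L0 U0 hL0 hkey σ n).A ∧
      b ∈ (states v c D0 L0 U0 hL0 hkey σ n).A ∧
      a ⊓ b ∈ (states v c D0 L0 U0 hL0 hkey σ n).A := by
    intro a b
    refine ⟨max (σ.symm a + 1) (σ.symm b + 1), ?_, ?_, ?_⟩
    · exact states_mono_le v c D0 L0 U0 hL0 hkey σ (le_max_left _ _)
        (mem_states v c D0 L0 U0 hL0 hkey σ a)
    · exact states_mono_le v c D0 L0 U0 hL0 hkey σ (le_max_right _ _)
        (mem_states v c D0 L0 U0 hL0 hkey σ b)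
    · exact (states v c D0 L0 U0 hL0 hkey σ _).hA _
        (states_mono_le v c D0 L0 U0 hL0 hkey σ (le_max_left _ _)
          (mem_states v c D0 L0 U0 hL0 hkey σ a)) _
        (states_mono_le v c D0 L0 U0 hL0 hkey σ (le_max_right _ _)
          (mem_states v c D0 L0 U0 hL0 hkey σ b))
  refine ⟨?_, ?_, ?_⟩
  · intro a b
    obtain ⟨n, ha, hb, hab⟩ := hmem a b
    rw [← glevel v c D0 L0 U0 hL0 hkey σ n a ha, ← glevel v c D0 L0 U0 hL0 hkey σ n b hb,
      ← glevel v c D0 L0 U0 hL0 hkey σ n _ hab]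
    exact (states v c D0 L0 U0 hL0 hkey σ n).hmeet a ha b hb
  · intro a b
    obtain ⟨n, ha, hb, _⟩ := hmem a b
    rw [← glevel v c D0 L0 U0 hL0 hkey σ n a ha, ← glevel v c D0 L0 U0 hL0 hkey σ n b hb]
    exact (states v c D0 L0 U0 hL0 hkey σ n).hle a ha b hb
  · intro a b hab
    obtain ⟨n, ha, hb, _⟩ := hmem a b
    rw [← glevel v c D0 L0 U0 hL0 hkey σ n a ha, ← glevel v c D0 L0 U0 hL0 hkey σ n b hb]
    exact (states v c D0 L0 U0 hL0 hkey σ n).hsun a ha b hb hab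

end Build

end Sunflower9


/-- The generic meet-semilattice has the infinite sunflower property.  Here `S` is a
countable ultrahomogeneous meet-semilattice whose age consists of all finite
meet-semilattices; a structure on `k`-sets isomorphic to `S` in the language `{<, ⊓}` is
given by a relation `lt'` and an operation `meet'` on a set `X` of `k`-element sets
together with an isomorphism from `S`; the conclusion produces an embedded copy of `S`
whose domain is a sunflower. -/
theorem statement9 (S : Type u) [SemilatticeInf S] [Countable S] [Infinite S]
    (ultra : ∀ A B : Set S, A.Finite → B.Finite →
      (∀ a ∈ A, ∀ b ∈ A, a ⊓ b ∈ A) → (∀ a ∈ B, ∀ b ∈ B, a ⊓ b ∈ B) →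
      ∀ e : ↥A ≃ ↥B,
        (∀ p q : ↥A, (p : S) < (q : S) ↔ (e p : S) < (e q : S)) →
        (∀ p q z : ↥A, (p : S) ⊓ (q : S) = (z : S) → (e p : S) ⊓ (e q : S) = (e z : S)) →
        ∃ g : S ≃o S, (∀ a b : S, g (a ⊓ b) = g a ⊓ g b) ∧ ∀ a : ↥A, g ↑a = ↑(e a))
    (age : ∀ (Q : Type u) [SemilatticeInf Q] [Fintype Q],
      ∃ f : Q ↪o S, ∀ a b : Q, f (a ⊓ b) = f a ⊓ f b) :
    ∀ k : ℕ, 1 ≤ k → ∀ (α : Type x) (X : Set (Finset α)), (∀ v ∈ X, v.card = k) →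
      ∀ (lt' : ↥X → ↥X → Prop) (meet' : ↥X → ↥X → ↥X),
        (∃ e : S ≃ ↥X, (∀ a b : S, a < b ↔ lt' (e a) (e b)) ∧
          ∀ a b : S, e (a ⊓ b) = meet' (e a) (e b)) →
        ∃ f : S → ↥X, Function.Injective f ∧
          (∀ a b : S, a < b ↔ lt' (f a) (f b)) ∧
          (∀ a b : S, f (a ⊓ b) = meet' (f a) (f b)) ∧
          ∃ c : Set α, ∀ a b : S, a ≠ b →
            ((f a : Finset α) : Set α) ∩ ((f b : Finset α) : Set α) = c := by
  classical
  intro k _hk α X hX lt' meet' ⟨e, he1, he2⟩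
  set v : S → Finset α := fun s => ((e s : ↥X) : Finset α) with hv
  have hvcard : ∀ s : S, (v s).card = k := fun s => hX _ (e s).2
  have hvinj : Function.Injective v := fun a b h => e.injective (Subtype.ext h)
  have hNE : ∀ D L U : Finset S, Sunflower9.Legit D L U →
      (Sunflower9.RSet D L U).Nonempty :=
    fun D L U hL => Sunflower9.gadget ultra age hL
  obtain ⟨c, D0, L0, U0, hL0, hGood, hmax⟩ := Sunflower9.exists_max hNE v k hvcard
  have hkey := Sunflower9.key hNE v hmax hGood
  haveI : Encodable S := Encodable.ofCountable S
  haveI : Denumerable S := Denumerable.ofEncodableOfInfinite S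
  set σ : ℕ ≃ S := (Denumerable.eqv S).symm with hσ
  obtain ⟨hgmeet, hgle, hgsun⟩ :=
    Sunflower9.build_final v c D0 L0 U0 hL0 hkey σ
  set g : S → S := Sunflower9.gfin v c D0 L0 U0 hL0 hkey σ with hg
  -- cardinality of the core
  have hccard : c.card < k := by
    have h2 := hGood D0 L0 U0 hL0 (subset_refl _)
    obtain ⟨t1, ht1⟩ := h2.nonempty
    obtain ⟨t2, ht2⟩ := (h2.diff (Set.finite_singleton t1)).nonempty
    have hne12 : t1 ≠ t2 := fun h => ht2.2 (by simp [h])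
    have hle1 : c.card ≤ k := (hvcard t1) ▸ Finset.card_le_card ht1.2
    rcases lt_or_eq_of_le hle1 with h | h
    · exact h
    · exfalso
      have hv1 : v t1 = c := (Finset.eq_of_subset_of_card_le ht1.2
        (le_of_eq ((hvcard t1).trans h.symm))).symm
      have hv2 : v t2 = c := (Finset.eq_of_subset_of_card_le ht2.1.2
        (le_of_eq ((hvcard t2).trans h.symm))).symm
      exact hne12 (hvinj (hv1.trans hv2.symm))
  have hginj : Function.Injective g := by
    intro a b h
    by_contra hab
    have := hgsun a b hab
    rw [h, Finset.inter_self] at this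
    rw [← this, hvcard] at hccard
    exact lt_irrefl _ hccard
  refine ⟨fun s => e (g s), fun a b h => hginj (e.injective h), ?_, ?_, ?_⟩
  · intro a b
    rw [← he1 (g a) (g b)]
    constructor
    · intro h
      exact lt_of_le_of_ne ((hgle a b).1 h.le) (fun h' => h.ne (hginj h'))
    · intro h
      exact lt_of_le_of_ne ((hgle a b).2 h.le) (fun h' => h.ne (congrArg g h'))
  · intro a b
    show e (g (a ⊓ b)) = meet' (e (g a)) (e (g b))
    rw [hgmeet a b]
    exact he2 (g a) (g b)
  · refine ⟨(↑c : Set α), ?_⟩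
    intro a b hab
    show (((e (g a) : ↥X) : Finset α) : Set α) ∩ (((e (g b) : ↥X) : Finset α) : Set α)
        = (↑c : Set α)
    rw [← Finset.coe_inter]
    exact congrArg (fun s : Finset α => (s : Set α)) (hgsun a b hab)
end

section
/- Let M be a relational Fraïssé structure in a language all of whose relation symbols have arity at most 2. If M is locally replicable, then every basic open set of M, with its induced structure, is isomorphic to M. -/
open FirstOrder FirstOrder.Language Set CategoryTheory

universe u v w x

/-!
Let `U` be the basic open set. Since relations have arity at most 2, a relation between an
element of `U` and parameters from `A` involves at most one parameter, so its truth value is part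
of the common quantifier-free type over `A` and is the same for all elements of `U`. Hence a
finite partial isomorphism of `U` glued with the identity on `A` is still a partial isomorphism
of `M`; ultrahomogeneity extends it to an automorphism fixing `A`, which preserves `U`. So `U`
is ultrahomogeneous, and by local replicability it has the same age as `M`. Both are countable
Fraïssé limits of that age, hence isomorphic.
-/

open FirstOrder.Language.Structure

section QfType

variable {L : FirstOrder.Language.{u, v}} {M : Type w} [L.Structure M] {A : Set M} {x y b : M}

theorem SameQfTypeOver.congr_left (h : SameQfTypeOver L M A x y) :
    SameQfTypeOver L M A x b ↔ SameQfTypeOver L M A y b :=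
  ⟨fun hxb n φ hφ g hg => (h n φ hφ g hg).symm.trans (hxb n φ hφ g hg),
    fun hyb n φ hφ g hg => (h n φ hφ g hg).trans (hyb n φ hφ g hg)⟩

theorem sameQfTypeOver_apply_self (σ : M ≃[L] M) (hσ : ∀ a ∈ A, σ a = a) (x : M) :
    SameQfTypeOver L M A (σ x) x := by
  intro n φ _ g hg
  have hcons : (Fin.cons (σ x) g : Fin (n + 1) → M) = σ ∘ Fin.cons x g := by
    ext i
    refine Fin.cases rfl (fun j => ?_) i
    simp [hσ _ (hg j)]
  rw [hcons, StrongHomClass.realize_formula]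

theorem SameQfTypeOver.eq_of_mem (h : SameQfTypeOver L M A x b) (hx : x ∈ A) : b = x := by
  have := h 1 ((Term.var 0).equal (Term.var 1)) (BoundedFormula.IsAtomic.equal _ _).isQF ![x]
    (by simpa using hx)
  simpa using this

theorem SameQfTypeOver.relMap_left (h : SameQfTypeOver L M A x b) (R : L.Relations 2)
    {a : M} (ha : a ∈ A) : RelMap R ![x, a] ↔ RelMap R ![b, a] := by
  have := h 1 (R.formula₂ (Term.var 0) (Term.var 1)) (BoundedFormula.IsAtomic.rel _ _).isQF ![a]
    (by simpa using ha)
  simpa using this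

theorem SameQfTypeOver.relMap_right (h : SameQfTypeOver L M A x b) (R : L.Relations 2)
    {a : M} (ha : a ∈ A) : RelMap R ![a, x] ↔ RelMap R ![a, b] := by
  have := h 1 (R.formula₂ (Term.var 1) (Term.var 0)) (BoundedFormula.IsAtomic.rel _ _).isQF ![a]
    (by simpa using ha)
  simpa using this

end QfType

namespace FirstOrder.Language

variable {L : Language.{u, v}} {M : Type w} [L.Structure M]

variable (L) in
def RelPreservingOn (φ : M → M) (s : Set M) : Prop :=
  ∀ {n} (R : L.Relations n) (x : Fin n → M), (∀ i, x i ∈ s) → (RelMap R (φ ∘ x) ↔ RelMap R x)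

variable (L) in
def BinaryIndiscernibleOver (A U : Set M) : Prop :=
  ∀ (R : L.Relations 2), ∀ a ∈ A, ∀ u ∈ U, ∀ v ∈ U,
    (RelMap R ![u, a] ↔ RelMap R ![v, a]) ∧ (RelMap R ![a, u] ↔ RelMap R ![a, v])

theorem IsUltrahomogeneous.exists_equiv_eqOn [L.IsRelational] (hM : L.IsUltrahomogeneous M)
    {s : Set M} (hs : s.Finite) {φ : M → M} (hinj : InjOn φ s) (hrel : RelPreservingOn L φ s) :
    ∃ σ : M ≃[L] M, EqOn σ φ s := by
  have hmem (x : Substructure.closure L s) : (x : M) ∈ s :=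
    (Substructure.mem_closure_iff_of_isRelational L s x).1 x.2
  let e : Substructure.closure L s ↪[L] M :=
    { toFun := fun x => φ x
      inj' := fun x y hxy => Subtype.ext (hinj (hmem x) (hmem y) hxy)
      map_fun' := fun f => isEmptyElim f
      map_rel' := fun R x => hrel R _ fun i => hmem (x i) }
  obtain ⟨σ, hσ⟩ := hM _ (Substructure.fg_closure hs) e
  exact ⟨σ, fun x hx => (DFunLike.congr_fun hσ ⟨x, Substructure.subset_closure hx⟩).symm⟩

section Gluing

variable {A U s : Set M} {φ : M → M}

theorem injOn_union_of_fixes (hUA : Disjoint U A) (hsU : s ⊆ U) (hφA : ∀ a ∈ A, φ a = a)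
    (hφs : MapsTo φ s U) (hinj : InjOn φ s) : InjOn φ (s ∪ A) := by
  refine (injOn_union (hUA.mono_left hsU)).2 ⟨hinj, fun a ha a' ha' h => ?_, fun x hx a ha h => ?_⟩
  · rwa [hφA a ha, hφA a' ha'] at h
  · exact hUA.ne_of_mem (hφs hx) ha (h.trans (hφA a ha))

theorem relPreservingOn_union_of_fixes (hbin : ∀ n : ℕ, 2 < n → IsEmpty (L.Relations n))
    (hind : BinaryIndiscernibleOver L A U) (hsU : s ⊆ U) (hφA : ∀ a ∈ A, φ a = a)
    (hφs : MapsTo φ s U) (hrel : RelPreservingOn L φ s) : RelPreservingOn L φ (s ∪ A) := by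
  intro n R x hx
  by_cases hxs : ∀ i, x i ∈ s
  · exact hrel R x hxs
  by_cases hxA : ∀ i, x i ∈ A
  · rw [show φ ∘ x = x from funext fun i => hφA _ (hxA i)]
  push Not at hxs hxA
  obtain ⟨i, hi⟩ := hxs
  obtain ⟨j, hj⟩ := hxA
  have hiA : x i ∈ A := (hx i).resolve_left hi
  have hjs : x j ∈ s := (hx j).resolve_right hj
  have hij : i ≠ j := by rintro rfl; exact hj hiA
  -- a tuple with one entry in `A \ s` and one in `s \ A` has arity two
  match n, R, x, i, j with
  | 1, _, _, i, j => exact absurd (Subsingleton.elim i j) hij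
  | 2, R, x, i, j =>
    have hx2 : x = ![x 0, x 1] := by ext k; fin_cases k <;> rfl
    have hφx : φ ∘ ![x 0, x 1] = ![φ (x 0), φ (x 1)] := by ext k; fin_cases k <;> rfl
    rw [hx2, hφx]
    match i, j, hiA, hjs with
    | 0, 0, _, _ | 1, 1, _, _ => exact absurd rfl hij
    | 0, 1, hiA, hjs =>
      rw [hφA _ hiA]
      exact (hind R _ hiA _ (hφs hjs) _ (hsU hjs)).2
    | 1, 0, hiA, hjs =>
      rw [hφA _ hiA]
      exact (hind R _ hiA _ (hφs hjs) _ (hsU hjs)).1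
  | n + 3, R, _, _, _ => exact ((hbin _ (by omega)).false R).elim

end Gluing

def Equiv.restrictSubstructure (σ : M ≃[L] M) (N : L.Substructure M)
    (hN : ∀ x, x ∈ N ↔ σ x ∈ N) : N ≃[L] N :=
  { σ.toEquiv.subtypeEquiv hN with
    map_fun' := fun f x => Subtype.ext (σ.map_fun f fun i => x i)
    map_rel' := fun R x => σ.map_rel R fun i => x i }

theorem isUltrahomogeneous_substructure [L.IsRelational]
    (hbin : ∀ n : ℕ, 2 < n → IsEmpty (L.Relations n)) (hM : L.IsUltrahomogeneous M)
    {A : Set M} (hA : A.Finite) (N : L.Substructure M) (hNA : Disjoint (N : Set M) A)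
    (hind : BinaryIndiscernibleOver L A (N : Set M))
    (hinv : ∀ σ : M ≃[L] M, (∀ a ∈ A, σ a = a) → ∀ x, x ∈ N ↔ σ x ∈ N) :
    L.IsUltrahomogeneous N := by
  intro S hS f
  have : Finite S := hS.finite
  let ι : S → M := fun y => ((y : N) : M)
  have hι : Function.Injective ι := Subtype.val_injective.comp Subtype.val_injective
  let φ : M → M := Function.extend ι (fun y => (f y : M)) id
  have hφS (y : S) : φ (ι y) = f y := hι.extend_apply _ _ y
  have hφA : ∀ a ∈ A, φ a = a := fun a ha =>
    Function.extend_apply' _ _ a (by rintro ⟨y, rfl⟩; exact hNA.ne_of_mem (y : N).2 ha rfl)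
  have hsN : range ι ⊆ N := range_subset_iff.2 fun y => (y : N).2
  have hφs : MapsTo φ (range ι) N := by
    rintro _ ⟨y, rfl⟩
    rw [hφS]
    exact (f y).2
  have hinj : InjOn φ (range ι) := by
    rintro _ ⟨y, rfl⟩ _ ⟨y', rfl⟩ h
    rw [hφS, hφS] at h
    exact congrArg ι (f.injective (Subtype.ext h))
  have hrel : RelPreservingOn L φ (range ι) := by
    intro n R x hx
    choose y hy using hx
    obtain rfl : x = ι ∘ y := funext fun i => (hy i).symm
    rw [show φ ∘ ι ∘ y = (↑) ∘ f ∘ y from funext fun i => hφS (y i)]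
    exact f.map_rel R y
  obtain ⟨σ, hσ⟩ := hM.exists_equiv_eqOn ((finite_range ι).union hA)
    (injOn_union_of_fixes hNA hsN hφA hφs hinj)
    (relPreservingOn_union_of_fixes hbin hind hsN hφA hφs hrel)
  have hσA (a : M) (ha : a ∈ A) : σ a = a := (hσ (Or.inr ha)).trans (hφA a ha)
  refine ⟨σ.restrictSubstructure N (hinv σ hσA), ?_⟩
  ext y
  exact (hφS y).symm.trans (hσ (Or.inl ⟨y, rfl⟩)).symm

theorem age_eq_of_containsCopy {N : L.Substructure M} (h : ContainsCopy L M N) :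
    L.age N = L.age M := by
  obtain ⟨S, hSN, ⟨e⟩⟩ := h
  exact N.subtype.age_subset_age.antisymm
    ((Substructure.inclusion hSN).comp e.symm.toEmbedding).age_subset_age

end FirstOrder.Language

/-- If `M` is a locally replicable relational Fraïssé structure in a language all of
whose relation symbols have arity at most 2, then every basic open set of `M`, with its
induced structure, is isomorphic to `M`. -/
theorem statement12 (L : FirstOrder.Language.{u, v}) [L.IsRelational]
    (hbin : ∀ n : ℕ, 2 < n → IsEmpty (L.Relations n))
    (M : Type w) [L.Structure M] [Countable M]
    (hM : L.IsUltrahomogeneous M)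
    (hrepl : LocallyReplicable L M) :
    ∀ A : L.Substructure M, (A : Set M).Finite → ∀ b : M, b ∉ (A : Set M) →
      IsCopy L M {v : M | SameQfTypeOver L M (A : Set M) v b} := by
  intro A hA b hb
  set U := {v : M | SameQfTypeOver L M (A : Set M) v b}
  let N := Substructure.closure L U
  have hNU : (N : Set M) = U := Substructure.closure_eq_of_isRelational L U
  have hNA : Disjoint (N : Set M) A := by
    rw [hNU]
    exact disjoint_left.2 fun v hv hvA => hb (hv.eq_of_mem hvA ▸ hvA)
  have hind : BinaryIndiscernibleOver L A (N : Set M) := by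
    rw [hNU]
    exact fun R a ha u hu v hv => ⟨(hu.relMap_left R ha).trans (hv.relMap_left R ha).symm,
      (hu.relMap_right R ha).trans (hv.relMap_right R ha).symm⟩
  have hinv (σ : M ≃[L] M) (hσ : ∀ a ∈ A, σ a = a) (x : M) : x ∈ N ↔ σ x ∈ N := by
    rw [← SetLike.mem_coe, ← SetLike.mem_coe, hNU]
    exact (sameQfTypeOver_apply_self σ hσ x).congr_left.symm
  have hage : L.age N = L.age M := age_eq_of_containsCopy (hNU ▸ hrepl A hA b hb)
  have : IsEmpty (Σ n, L.Functions n) := isEmpty_sigma.2 inferInstance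
  exact ⟨N, hNU, IsFraisseLimit.nonempty_equiv
    ⟨isUltrahomogeneous_substructure hbin hM hA N hNA hind hinv, hage⟩ ⟨hM, rfl⟩⟩
end

section
/- Let n ≥ 2. For every real number a₁ with 0 < a₁ < 1, there exist a real number a₀ with 0 < a₀ < 1 and C ∈ ℕ such that: for every finite set V partitioned into n parts V₀, …, V_{n−1} each of size c, where c ≥ C, and for every colouring χ : V → ℕ, at least one of the following holds: (i) there is i < n such that V_i contains more than a₀ · cⁿ n-element subsets on which χ is constant; (ii) there are more than (1 − a₁) · cⁿ n-element subsets of V which meet each part V_i in exactly one point and on which χ is injective. -/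
universe u

open Finset

section aux

variable {V : Type u} [Fintype V] [DecidableEq V] {n c : ℕ} {π : V → Fin n}

lemma pi_count (hc : ∀ i, (univ.filter (fun v => π v = i)).card = c)
    {ι : Type} [Fintype ι] [DecidableEq ι] (τ : ι → Fin n) :
    (univ.filter (fun g : ι → V => ∀ k, π (g k) = τ k)).card = c ^ Fintype.card ι := by
  classical
  have h : univ.filter (fun g : ι → V => ∀ k, π (g k) = τ k)
      = Fintype.piFinset (fun k => univ.filter (fun v => π v = τ k)) := by
    ext g; simp [Fintype.mem_piFinset]
  rw [h, Fintype.card_piFinset]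
  simp [hc]

lemma bad_count (hc : ∀ i, (univ.filter (fun v => π v = i)).card = c)
    {χ : V → ℕ} {B : ℕ}
    (hB : ∀ (j : Fin n) (k : ℕ), (univ.filter (fun v => π v = j ∧ χ v = k)).card ≤ B)
    {i j : Fin n} (hij : i ≠ j) :
    (univ.filter (fun f : Fin n → V => (∀ k, π (f k) = k) ∧ χ (f i) = χ (f j))).card
      ≤ B * c ^ (n - 1) := by
  classical
  set s := univ.filter (fun f : Fin n → V => (∀ k, π (f k) = k) ∧ χ (f i) = χ (f j)) with hs
  set t := univ.filter (fun g : {k : Fin n // k ≠ j} → V => ∀ k, π (g k) = (k : Fin n)) with ht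
  have maps : ∀ f ∈ s, (fun k : {k : Fin n // k ≠ j} => f (k : Fin n)) ∈ t := by
    intro f hf
    simp only [hs, mem_filter, mem_univ, true_and] at hf
    simp only [ht, mem_filter, mem_univ, true_and]
    exact fun k => hf.1 k
  have hfib : ∀ g ∈ t,
      (s.filter (fun f => (fun k : {k : Fin n // k ≠ j} => f (k : Fin n)) = g)).card ≤ B := by
    intro g hg
    refine le_trans (Finset.card_le_card_of_injOn (fun f => f j)
      (t := univ.filter (fun v => π v = j ∧ χ v = χ (g ⟨i, hij⟩))) ?_ ?_) (hB j _)
    · intro f hf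
      simp only [Finset.mem_coe, mem_filter, mem_univ, true_and, hs] at hf
      obtain ⟨⟨hsec, hcol⟩, hres⟩ := hf
      refine mem_filter.2 ⟨mem_univ _, hsec j, ?_⟩
      have hfi : f i = g ⟨i, hij⟩ := congrFun hres ⟨i, hij⟩
      rw [← hcol, ← hfi]
    · intro f1 h1 f2 h2 hval
      simp only [Finset.coe_filter, Set.mem_setOf_eq] at h1 h2
      funext k
      by_cases hk : k = j
      · subst hk; exact hval
      · have e1 : f1 k = g ⟨k, hk⟩ := congrFun h1.2 ⟨k, hk⟩
        have e2 : f2 k = g ⟨k, hk⟩ := congrFun h2.2 ⟨k, hk⟩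
        rw [e1, e2]
  have hcard : s.card ≤ B * t.card :=
    Finset.card_le_mul_card_image_of_maps_to maps B hfib
  have htc : t.card = c ^ (n - 1) := by
    rw [ht, pi_count hc]
    congr 1
    rw [Fintype.card_subtype_compl, Fintype.card_subtype_eq, Fintype.card_fin]
  rw [htc] at hcard
  exact hcard

end aux

/-- For `n ≥ 2` and `0 < a₁ < 1` there exist `0 < a₀ < 1` and `C ∈ ℕ` such that for every
finite set `V` partitioned by `π` into `n` parts of equal size `c ≥ C` and every colouring
`χ : V → ℕ`, either some part contains more than `a₀ · cⁿ` monochromatic `n`-subsets, or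
there are more than `(1 − a₁) · cⁿ` heterochromatic transversal `n`-subsets. -/
theorem statement15 (n : ℕ) (hn : 2 ≤ n) (a₁ : ℝ) (ha₁ : 0 < a₁) (ha₁' : a₁ < 1) :
    ∃ a₀ : ℝ, 0 < a₀ ∧ a₀ < 1 ∧ ∃ C : ℕ,
      ∀ (V : Type u) [Fintype V] (π : V → Fin n) (c : ℕ), C ≤ c →
        (∀ i : Fin n, {v : V | π v = i}.ncard = c) →
        ∀ χ : V → ℕ,
          (∃ i : Fin n, a₀ * (c : ℝ) ^ n <
            ({t : Finset V | (∀ v ∈ t, π v = i) ∧ t.card = n ∧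
              ∀ u ∈ t, ∀ v ∈ t, χ u = χ v}.ncard : ℝ)) ∨
          ((1 - a₁) * (c : ℝ) ^ n <
            ({t : Finset V | t.card = n ∧ (∀ i : Fin n, ∃! v, v ∈ t ∧ π v = i) ∧
              Set.InjOn χ ↑t}.ncard : ℝ)) := by
  classical
  have hn2 : (2:ℝ) ≤ (n:ℝ) := by exact_mod_cast hn
  have hn0 : (0:ℝ) < n := by linarith
  have hnsq : (4:ℝ) ≤ (n:ℝ)^2 := by nlinarith
  set ε : ℝ := a₁ / (2 * (n:ℝ)^2) with hεdef
  have hεpos : 0 < ε := by positivity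
  have hε1 : ε < 1 := by
    rw [hεdef, div_lt_one (by positivity)]
    nlinarith
  refine ⟨(ε / (2*n))^n, by positivity, ?_, ⌈(2*(n:ℝ))/ε⌉₊ + 1, ?_⟩
  · apply pow_lt_one₀ (by positivity) ?_ (by omega)
    rw [div_lt_one (by positivity)]
    nlinarith
  intro V _ π c hC hsize χ
  have hsize' : ∀ i : Fin n, (univ.filter fun v => π v = i).card = c := by
    intro i
    have h := hsize i
    rwa [Set.ncard_eq_toFinset_card', Set.toFinset_setOf] at h
  have hcb : (2*(n:ℝ))/ε ≤ c := by
    refine le_trans (Nat.le_ceil _) ?_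
    exact_mod_cast le_trans (Nat.le_succ _) hC
  have hεc : (2*(n:ℝ)) ≤ ε * c := by
    rw [div_le_iff₀ hεpos] at hcb
    linarith
  have hc1 : (1:ℕ) ≤ c := le_trans (Nat.le_add_left 1 _) hC
  have hcpos : (0:ℝ) < c := by exact_mod_cast hc1
  have hcn : (0:ℝ) < (c:ℝ)^n := by positivity
  rw [or_iff_not_imp_left]
  intro hmono
  push_neg at hmono
  -- every colour class inside a part has size at most ε c
  have hclass : ∀ (j : Fin n) (k : ℕ),
      ((univ.filter fun v => π v = j ∧ χ v = k).card : ℝ) ≤ ε * c := by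
    intro j k
    by_contra hbig
    push_neg at hbig
    set m := (univ.filter fun v => π v = j ∧ χ v = k).card with hm
    have hmn : n ≤ m := by
      have h1 : (n:ℝ) < m := by linarith
      exact_mod_cast h1.le
    -- lower bound on choose
    have hch : ((ε/(2*(n:ℝ)))^n * (c:ℝ)^n : ℝ) < (m.choose n : ℝ) := by
      have h1 := Nat.pow_le_choose (α := ℝ) n m
      have hsub : ((m + 1 - n : ℕ) : ℝ) = (m:ℝ) + 1 - (n:ℝ) := by
        have : n ≤ m + 1 := le_trans hmn (Nat.le_succ m)
        push_cast [this]
        ring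
      have hfact : ((n.factorial : ℕ) : ℝ) ≤ (n:ℝ)^n := by
        exact_mod_cast Nat.factorial_le_pow n
      have hfpos : (0:ℝ) < ((n.factorial : ℕ) : ℝ) := by exact_mod_cast n.factorial_pos
      have hbase : ε * c / (2*(n:ℝ)) < ((m:ℝ) + 1 - n) / n := by
        rw [div_lt_div_iff₀ (by positivity) hn0]
        nlinarith
      calc (ε/(2*(n:ℝ)))^n * (c:ℝ)^n = (ε * c/(2*(n:ℝ)))^n := by
            rw [← mul_pow]; ring_nf
        _ < (((m:ℝ) + 1 - n) / n)^n := by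
            apply pow_lt_pow_left₀ hbase (by positivity) (by omega)
        _ = ((m:ℝ) + 1 - n)^n / (n:ℝ)^n := by rw [div_pow]
        _ ≤ ((m:ℝ) + 1 - n)^n / ((n.factorial : ℕ) : ℝ) := by
            apply div_le_div_of_nonneg_left ?_ hfpos hfact
            have : (0:ℝ) ≤ (m:ℝ) + 1 - n := by
              have : (n:ℝ) ≤ m := by exact_mod_cast hmn
              linarith
            positivity
        _ ≤ (m.choose n : ℝ) := by
            rw [← hsub]
            exact_mod_cast h1
    -- the monochromatic count is at least choose m n
    have hsubset : ((Finset.powersetCard n (univ.filter fun v => π v = j ∧ χ v = k) :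
        Finset (Finset V)) : Set (Finset V)) ⊆
        {t : Finset V | (∀ v ∈ t, π v = j) ∧ t.card = n ∧ ∀ u ∈ t, ∀ v ∈ t, χ u = χ v} := by
      intro t ht
      simp only [Finset.mem_coe, Finset.mem_powersetCard] at ht
      obtain ⟨hts, htc⟩ := ht
      refine ⟨fun v hv => ((mem_filter.1 (hts hv)).2).1, htc, fun u hu v hv => ?_⟩
      rw [((mem_filter.1 (hts hu)).2).2, ((mem_filter.1 (hts hv)).2).2]
    have hge : (m.choose n : ℝ) ≤
        (({t : Finset V | (∀ v ∈ t, π v = j) ∧ t.card = n ∧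
          ∀ u ∈ t, ∀ v ∈ t, χ u = χ v}.ncard : ℕ) : ℝ) := by
      have h2 : m.choose n ≤ {t : Finset V | (∀ v ∈ t, π v = j) ∧ t.card = n ∧
          ∀ u ∈ t, ∀ v ∈ t, χ u = χ v}.ncard := by
        rw [← Finset.card_powersetCard, ← Set.ncard_coe_finset]
        exact Set.ncard_le_ncard hsubset (Set.toFinite _)
      exact_mod_cast h2
    have := hmono j
    linarith
  -- counting sections
  set S := univ.filter (fun f : Fin n → V => ∀ k, π (f k) = k) with hSdef
  have hScard : S.card = c ^ n := by
    have h := pi_count hsize' (ι := Fin n) (fun k => k)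
    rw [Fintype.card_fin] at h
    rw [hSdef, ← h]
    congr 1
    ext f
    simp
  set Good := S.filter (fun f => Function.Injective (χ ∘ f)) with hGooddef
  set Bad := S.filter (fun f => ¬ Function.Injective (χ ∘ f)) with hBaddef
  have hsplit : Good.card + Bad.card = c ^ n := by
    rw [← hScard]
    exact Finset.card_filter_add_card_filter_not _
  -- bound on Bad
  set B := ⌊ε * c⌋₊ with hBdef
  have hBnat : ∀ (j : Fin n) (k : ℕ),
      (univ.filter fun v => π v = j ∧ χ v = k).card ≤ B :=
    fun j k => Nat.le_floor (hclass j k)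
  have hBad : Bad.card ≤ n^2 * (B * c^(n-1)) := by
    have hsub : Bad ⊆ (univ : Finset (Fin n)).offDiag.biUnion
        (fun p => univ.filter (fun f : Fin n → V =>
          (∀ k, π (f k) = k) ∧ χ (f p.1) = χ (f p.2))) := by
      intro f hf
      simp only [hBaddef, hSdef, mem_filter, mem_univ, true_and] at hf
      obtain ⟨hsec, hninj⟩ := hf
      obtain ⟨a, b, hab, hne⟩ := Function.not_injective_iff.1 hninj
      refine Finset.mem_biUnion.2 ⟨(a, b), Finset.mem_offDiag.2 ⟨mem_univ _, mem_univ _, hne⟩, ?_⟩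
      exact mem_filter.2 ⟨mem_univ _, hsec, hab⟩
    refine le_trans (Finset.card_le_card hsub) (le_trans Finset.card_biUnion_le ?_)
    refine le_trans (Finset.sum_le_card_nsmul _ _ (B * c^(n-1)) ?_) ?_
    · rintro ⟨a, b⟩ hp
      exact bad_count hsize' hBnat (Finset.mem_offDiag.1 hp).2.2
    · rw [smul_eq_mul]
      apply Nat.mul_le_mul_right
      calc (univ : Finset (Fin n)).offDiag.card
          = n * n - n := by rw [Finset.offDiag_card]; simp
        _ ≤ n * n := Nat.sub_le _ _
        _ = n^2 := (sq n).symm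
  have hBadR : (Bad.card : ℝ) ≤ (a₁/2) * (c:ℝ)^n := by
    have h1 : (Bad.card : ℝ) ≤ (n:ℝ)^2 * ((B:ℝ) * (c:ℝ)^(n-1)) := by
      exact_mod_cast hBad
    have h2 : (B:ℝ) ≤ ε * c := Nat.floor_le (by positivity)
    have h3 : (c:ℝ)^(n-1) * c = (c:ℝ)^n := by
      rw [← pow_succ]
      congr 1
      omega
    have h4 : (0:ℝ) ≤ (c:ℝ)^(n-1) := by positivity
    calc (Bad.card : ℝ) ≤ (n:ℝ)^2 * ((B:ℝ) * (c:ℝ)^(n-1)) := h1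
      _ ≤ (n:ℝ)^2 * ((ε * c) * (c:ℝ)^(n-1)) := by gcongr
      _ = ((n:ℝ)^2 * ε) * ((c:ℝ)^(n-1) * c) := by ring
      _ = (a₁/2) * (c:ℝ)^n := by
          rw [h3, hεdef]
          field_simp
  -- map Good into the set of heterochromatic transversals
  set T := {t : Finset V | t.card = n ∧ (∀ i : Fin n, ∃! v, v ∈ t ∧ π v = i) ∧
      Set.InjOn χ ↑t} with hTdef
  set Φ : (Fin n → V) → Finset V := fun f => Finset.image f univ with hΦdef
  have himg : ∀ f ∈ Good, Φ f ∈ T := by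
    intro f hf
    simp only [hGooddef, hSdef, mem_filter, mem_univ, true_and] at hf
    obtain ⟨hsec, hinj⟩ := hf
    have hfinj : Function.Injective f := by
      intro a b h
      rw [← hsec a, ← hsec b, h]
    refine ⟨?_, ?_, ?_⟩
    · rw [hΦdef]
      simp only
      rw [Finset.card_image_of_injective _ hfinj, Finset.card_univ, Fintype.card_fin]
    · intro i
      refine ⟨f i, ⟨Finset.mem_image_of_mem f (mem_univ i), hsec i⟩, ?_⟩
      rintro v ⟨hv, hπ⟩
      obtain ⟨k, -, rfl⟩ := Finset.mem_image.1 hv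
      rw [hsec k] at hπ
      rw [hπ]
    · intro u hu v hv he
      simp only [hΦdef, Finset.coe_image, Finset.coe_univ, Set.image_univ, Set.mem_range] at hu hv
      obtain ⟨a, rfl⟩ := hu
      obtain ⟨b, rfl⟩ := hv
      rw [hinj he]
  have hinjΦ : Set.InjOn Φ Good := by
    intro f hf g hg he
    have hf1 : ∀ k, π (f k) = k := by
      have h := Finset.mem_coe.1 hf
      rw [hGooddef, mem_filter, hSdef, mem_filter] at h
      exact h.1.2
    have hg1 : ∀ k, π (g k) = k := by
      have h := Finset.mem_coe.1 hg
      rw [hGooddef, mem_filter, hSdef, mem_filter] at h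
      exact h.1.2
    simp only [hΦdef] at he
    funext k
    have h1 : f k ∈ Finset.image g univ := by
      rw [← he]
      exact Finset.mem_image_of_mem f (mem_univ k)
    obtain ⟨l, -, hl⟩ := Finset.mem_image.1 h1
    have hlk : l = k := by rw [← hf1 k, ← hl, hg1 l]
    rw [← hl, hlk]
  have hTcard : (Good.card : ℝ) ≤ (T.ncard : ℝ) := by
    have h1 : Good.card ≤ T.ncard := by
      rw [← Finset.card_image_of_injOn hinjΦ, ← Set.ncard_coe_finset]
      refine Set.ncard_le_ncard ?_ (Set.toFinite _)
      intro t ht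
      obtain ⟨f, hf, rfl⟩ := Finset.mem_image.1 (Finset.mem_coe.1 ht)
      exact himg f hf
    exact_mod_cast h1
  have hGoodR : (c:ℝ)^n - (a₁/2) * (c:ℝ)^n ≤ (Good.card : ℝ) := by
    have h1 : (Good.card : ℝ) + (Bad.card : ℝ) = (c:ℝ)^n := by
      exact_mod_cast hsplit
    linarith
  calc (1 - a₁) * (c:ℝ)^n < (c:ℝ)^n - (a₁/2) * (c:ℝ)^n := by nlinarith
    _ ≤ (Good.card : ℝ) := hGoodR
    _ ≤ (T.ncard : ℝ) := hTcard
end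

section
/- Let M be a transitive relational Fraïssé structure. Then M is age-indivisible if and only if Age(M) has the vertex-Ramsey property. -/
/-
Compactness: if every finite substructure of `M` has a 2-colouring with no monochromatic copy
of `B`, these colourings glue, along an ultrafilter on the finite subsets of `M` refining the
order filter, to such a colouring of `M`, and then neither colour class has the full age.
Conversely, if a finite `T₀` has no copy inside `X` and a finite `T₁` none inside `Xᶜ`, colour
a vertex-Ramsey witness for `T₀ ∪ T₁` by the side of `(X, Xᶜ)` its image in `M` falls into; a
monochromatic copy of `T₀ ∪ T₁` gives a contradiction.
-/

open FirstOrder FirstOrder.Language Set CategoryTheory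

universe u v w x

/-- `Age(X) = Age(M)` for a subset `X` of `M`: every finite substructure of `M` embeds
into `M` with range inside `X`. -/
def AgeEqualOn (L : FirstOrder.Language.{u, v}) (M : Type w) [L.Structure M]
    (X : Set M) : Prop :=
  ∀ T : L.Substructure M, (T : Set M).Finite →
    ∃ f : T ↪[L] M, Set.range f ⊆ X

open Filter

def IsAgeIndivisible (L : FirstOrder.Language.{u, v}) (M : Type w) [L.Structure M] : Prop :=
  ∀ C : Set M, AgeEqualOn L M C ∨ AgeEqualOn L M Cᶜ

def HasVertexRamsey {L : FirstOrder.Language.{u, v}} (K : Set (Bundled.{w} L.Structure)) :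
    Prop :=
  ∀ B ∈ K, ∃ C ∈ K, ∀ χ : C → Fin 2, ∃ e : B ↪[L] C, ∀ a b : B, χ (e a) = χ (e b)

theorem Ultrafilter.exists_eventually_eq {ι κ : Type*} [Finite κ] (U : Ultrafilter ι)
    (f : ι → κ) : ∃ c, ∀ᶠ i in U, f i = c := by
  obtain ⟨c, hc⟩ := (U.map f).eq_pure_of_finite
  have : f ⁻¹' {c} ∈ U := by
    rw [← Ultrafilter.mem_map, hc]
    exact Ultrafilter.mem_pure.2 rfl
  exact ⟨c, this⟩

section

variable {L : FirstOrder.Language.{u, v}} {M : Type w} [L.Structure M]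

theorem exists_coloring_forall_embedding_nonconstant {κ : Type*} [Finite κ] [Nonempty κ]
    {B : Type*} [L.Structure B] [Finite B]
    (hbad : ∀ S : L.Substructure M, S.FG →
      ∃ χ : S → κ, ∀ e : B ↪[L] S, ∃ a b, χ (e a) ≠ χ (e b)) :
    ∃ χ : M → κ, ∀ f : B ↪[L] M, ∃ a b, χ (f a) ≠ χ (f b) := by
  classical
  choose χS hχS using fun s : Finset M =>
    hbad (Substructure.closure L (s : Set M)) (Substructure.fg_closure s.finite_toSet)
  let χs (s : Finset M) (x : M) : κ :=
    if hx : x ∈ Substructure.closure L (s : Set M) then χS s ⟨x, hx⟩ else Classical.arbitrary κ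
  let U : Ultrafilter (Finset M) := Ultrafilter.of atTop
  choose χ hχ using fun x => U.exists_eventually_eq (χs · x)
  refine ⟨χ, fun f => ?_⟩
  have hsub : ∀ᶠ s in U, (finite_range f).toFinset ⊆ s :=
    Ultrafilter.of_le atTop (eventually_ge_atTop _)
  have hagree : ∀ᶠ s in U, ∀ b, χs s (f b) = χ (f b) := eventually_all.2 fun b => hχ (f b)
  obtain ⟨s, hs, hcol⟩ := (hsub.and hagree).exists
  have hmem : ∀ b, f b ∈ Substructure.closure L (s : Set M) :=
    fun b => Substructure.subset_closure (hs (by simp))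
  obtain ⟨a, b, hab⟩ := hχS s (f.codRestrict _ hmem)
  refine ⟨a, b, ?_⟩
  rw [← hcol a, ← hcol b]
  simpa [χs, hmem] using hab

theorem AgeEqualOn.exists_embedding [L.IsRelational] {X : Set M} (hX : AgeEqualOn L M X)
    {B : Bundled.{w} L.Structure} (hB : B ∈ L.age M) : ∃ f : B ↪[L] M, range f ⊆ X := by
  obtain ⟨j⟩ := hB.2
  have : Finite B := Structure.fg_iff_finite.1 hB.1
  obtain ⟨g, hg⟩ := hX j.toHom.range (by simpa [Hom.range_coe] using finite_range j)
  exact ⟨g.comp j.equivRange.toEmbedding, range_subset_iff.2 fun _ => hg ⟨_, rfl⟩⟩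

theorem hasVertexRamsey_age_of_isAgeIndivisible [L.IsRelational] (hM : IsAgeIndivisible L M) :
    HasVertexRamsey (L.age M) := by
  intro B hB
  by_contra! hbad
  have : Finite B := Structure.fg_iff_finite.1 hB.1
  obtain ⟨χ, hχ⟩ := exists_coloring_forall_embedding_nonconstant (κ := Fin 2)
    fun S hS => hbad _ (age.fg_substructure hS)
  have hnot : ∀ X : Set M, ∀ c, (∀ x ∈ X, χ x = c) → ¬AgeEqualOn L M X := by
    intro X c hc hX
    obtain ⟨f, hf⟩ := hX.exists_embedding hB
    obtain ⟨a, b, hab⟩ := hχ f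
    exact hab ((hc _ (hf ⟨a, rfl⟩)).trans (hc _ (hf ⟨b, rfl⟩)).symm)
  rcases hM (χ ⁻¹' {0}) with h₀ | h₁
  · exact hnot _ 0 (fun x hx => hx) h₀
  · exact hnot _ 1 (fun x hx => Fin.eq_one_of_ne_zero _ hx) h₁

theorem HasVertexRamsey.exists_embedding_range_subset_or_compl
    (hR : HasVertexRamsey (L.age M)) {B : Bundled.{w} L.Structure} (hB : B ∈ L.age M)
    (X : Set M) : (∃ f : B ↪[L] M, range f ⊆ X) ∨ ∃ f : B ↪[L] M, range f ⊆ Xᶜ := by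
  classical
  obtain ⟨C, hC, hCR⟩ := hR B hB
  obtain ⟨j⟩ := hC.2
  obtain ⟨e, he⟩ := hCR fun c => if j c ∈ X then 0 else 1
  by_cases hall : ∀ b, j (e b) ∈ X
  · exact .inl ⟨j.comp e, range_subset_iff.2 hall⟩
  · push Not at hall
    obtain ⟨b₀, hb₀⟩ := hall
    refine .inr ⟨j.comp e, range_subset_iff.2 fun b (hb : j (e b) ∈ X) => ?_⟩
    simpa [hb, hb₀] using he b b₀

theorem isAgeIndivisible_of_hasVertexRamsey_age (hR : HasVertexRamsey (L.age M)) :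
    IsAgeIndivisible L M := by
  intro X
  by_contra! h
  simp only [AgeEqualOn, not_forall, not_exists] at h
  obtain ⟨⟨T₀, hT₀, h₀⟩, ⟨T₁, hT₁, h₁⟩⟩ := h
  have : Finite T₀ := hT₀.to_subtype
  have : Finite T₁ := hT₁.to_subtype
  have hT : Bundled.mk ↥(T₀ ⊔ T₁) ∈ L.age M :=
    age.fg_substructure ((Substructure.FG.of_finite (s := T₀)).sup (.of_finite (s := T₁)))
  rcases hR.exists_embedding_range_subset_or_compl hT X with ⟨f, hf⟩ | ⟨f, hf⟩
  · exact h₀ (f.comp (Substructure.inclusion le_sup_left))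
      (range_subset_iff.2 fun _ => hf ⟨_, rfl⟩)
  · exact h₁ (f.comp (Substructure.inclusion le_sup_right))
      (range_subset_iff.2 fun _ => hf ⟨_, rfl⟩)
end

theorem statement18_general (L : FirstOrder.Language.{u, v}) [L.IsRelational]
    (M : Type w) [L.Structure M] :
    (∀ C : Set M, AgeEqualOn L M C ∨ AgeEqualOn L M Cᶜ) ↔
      (∀ B ∈ L.age M, ∃ C ∈ L.age M,
        ∀ χ : C → Fin 2, ∃ e : B ↪[L] C, ∀ a b : B, χ (e a) = χ (e b)) :=
  ⟨hasVertexRamsey_age_of_isAgeIndivisible, isAgeIndivisible_of_hasVertexRamsey_age⟩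

/-- A transitive relational Fraïssé structure is age-indivisible if and only if its age
has the vertex-Ramsey property. -/
theorem statement18 (L : FirstOrder.Language.{u, v}) [L.IsRelational]
    (M : Type w) [L.Structure M] [Countable M]
    (hM : L.IsUltrahomogeneous M)
    (htrans : ∀ v w : M, ∃ g : M ≃[L] M, g v = w) :
    (∀ C : Set M, AgeEqualOn L M C ∨ AgeEqualOn L M Cᶜ) ↔
      (∀ B ∈ L.age M, ∃ C ∈ L.age M,
        ∀ χ : C → Fin 2, ∃ e : B ↪[L] C, ∀ a b : B, χ (e a) = χ (e b)) :=
  statement18_general L M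
end
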